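/- arXiv:1102.5606 — 6 statements merged into one kernel-verified Lean document; each statement's English description precedes it below -/
import Mathlib

section
/- Let σ > 0 and let Z be a real Gaussian random variable with mean 0 and variance σ². Let h : ℝ → ℝ be strictly increasing and continuous and satisfy condition [A₊] with parameter b₊ > 0. Then the right tail of the distribution of Y = h(Z) is regularly varying at infinity with index −β₊, where β₊ = 1/(2 b₊ σ²): that is, for every λ > 0, P(h(Z) > λy) / P(h(Z) > y) → λ^{−β₊} as y → ∞. -/
/-!
Write `h = exp F` near `+∞` with `F x = b x² + f x + r x`, and let `g` be a right inverse of `h`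
there, so that `P(h Z > y) = P(Z > g y)`. Since `F (g (λ y)) - F (g y) = log λ`, and `f' = o(x)`
gives `f t - f s = o(t² - s²)` by the mean value theorem, `g (λ y)² - g y² → log λ / b`.
By Mills' ratio, `∫_c^∞ exp (-a x²) dx ~ exp (-a c²) / (2 a c)`, so the Gaussian tails at `t` and
`s` have ratio tending to `exp (-a c)` whenever `t² - s² → c`; with `a = 1 / (2σ²)` and
`c = log λ / b` this is `λ ^ (-1 / (2 b σ²))`.
-/

open MeasureTheory ProbabilityTheory Filter Real Set Asymptotics Topology

section GaussianTail

variable {a : ℝ}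

lemma hasDerivAt_neg_exp_neg_mul_sq_div (ha : a ≠ 0) {x : ℝ} (hx : x ≠ 0) :
    HasDerivAt (fun t => -(exp (-a * t ^ 2) / (2 * a * t)))
      (exp (-a * x ^ 2) * (1 + (2 * a * x ^ 2)⁻¹)) x := by
  have hexp : HasDerivAt (fun t => exp (-a * t ^ 2)) (exp (-a * x ^ 2) * (-a * (2 * x))) x := by
    simpa using ((hasDerivAt_pow 2 x).const_mul (-a)).exp
  have hlin : HasDerivAt (fun t => 2 * a * t) (2 * a) x := by
    simpa using (hasDerivAt_id x).const_mul (2 * a)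
  refine (hexp.div hlin (by positivity)).neg.congr_deriv ?_
  field_simp
  ring

lemma tendsto_neg_exp_neg_mul_sq_div_atTop (ha : 0 < a) :
    Tendsto (fun t => -(exp (-a * t ^ 2) / (2 * a * t))) atTop (𝓝 0) := by
  have hexp : Tendsto (fun t => exp (-a * t ^ 2)) atTop (𝓝 0) :=
    tendsto_exp_atBot.comp
      ((tendsto_pow_atTop two_ne_zero).const_mul_atTop_of_neg (neg_neg_of_pos ha))
  have hlin : Tendsto (fun t => 2 * a * t) atTop atTop :=
    tendsto_id.const_mul_atTop (by positivity)
  simpa using (hexp.div_atTop hlin).neg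

/-- `-exp (-a x²) / (2 a x)` is an antiderivative of this integrand, which lies between
`exp (-a x²)` and `(1 + (2 a c²)⁻¹) exp (-a x²)` on `(c, ∞)`: hence the two Mills bounds. -/
lemma integral_Ioi_exp_neg_mul_sq_mul_one_add (ha : 0 < a) {c : ℝ} (hc : 0 < c) :
    IntegrableOn (fun x => exp (-a * x ^ 2) * (1 + (2 * a * x ^ 2)⁻¹)) (Ioi c) ∧
      ∫ x in Ioi c, exp (-a * x ^ 2) * (1 + (2 * a * x ^ 2)⁻¹)
        = exp (-a * c ^ 2) / (2 * a * c) := by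
  have hderiv : ∀ x ∈ Ici c, HasDerivAt (fun t => -(exp (-a * t ^ 2) / (2 * a * t)))
      (exp (-a * x ^ 2) * (1 + (2 * a * x ^ 2)⁻¹)) x :=
    fun x hx => hasDerivAt_neg_exp_neg_mul_sq_div ha.ne' (hc.trans_le hx).ne'
  have hnonneg : ∀ x ∈ Ioi c, 0 ≤ exp (-a * x ^ 2) * (1 + (2 * a * x ^ 2)⁻¹) :=
    fun x _ => by positivity
  have hlim := tendsto_neg_exp_neg_mul_sq_div_atTop ha
  refine ⟨integrableOn_Ioi_deriv_of_nonneg' hderiv hnonneg hlim, ?_⟩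
  rw [integral_Ioi_of_hasDerivAt_of_nonneg' hderiv hnonneg hlim]
  ring

lemma integral_Ioi_exp_neg_mul_sq_le (ha : 0 < a) {c : ℝ} (hc : 0 < c) :
    ∫ x in Ioi c, exp (-a * x ^ 2) ≤ exp (-a * c ^ 2) / (2 * a * c) := by
  obtain ⟨hint, heq⟩ := integral_Ioi_exp_neg_mul_sq_mul_one_add ha hc
  rw [← heq]
  refine setIntegral_mono_on (integrable_exp_neg_mul_sq ha).integrableOn hint measurableSet_Ioi
    fun x _ => le_mul_of_one_le_right (exp_pos _).le ?_
  linarith [show 0 ≤ (2 * a * x ^ 2)⁻¹ by positivity]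

lemma le_one_add_mul_integral_Ioi_exp_neg_mul_sq (ha : 0 < a) {c : ℝ} (hc : 0 < c) :
    exp (-a * c ^ 2) / (2 * a * c) ≤ (1 + (2 * a * c ^ 2)⁻¹) * ∫ x in Ioi c, exp (-a * x ^ 2) := by
  obtain ⟨hint, heq⟩ := integral_Ioi_exp_neg_mul_sq_mul_one_add ha hc
  rw [← heq, ← integral_const_mul]
  refine setIntegral_mono_on hint ((integrable_exp_neg_mul_sq ha).integrableOn.const_mul _)
    measurableSet_Ioi fun x (hx : c < x) => ?_
  rw [mul_comm]
  gcongr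

lemma integral_Ioi_exp_neg_mul_sq_isEquivalent (ha : 0 < a) :
    (fun c => ∫ x in Ioi c, exp (-a * x ^ 2)) ~[atTop] fun c => exp (-a * c ^ 2) / (2 * a * c) := by
  refine isEquivalent_of_tendsto_one ?_
  have hcorr : Tendsto (fun c : ℝ => (1 + (2 * a * c ^ 2)⁻¹)⁻¹) atTop (𝓝 1) := by
    have h := ((tendsto_pow_atTop two_ne_zero).const_mul_atTop
      (by positivity : 0 < 2 * a)).inv_tendsto_atTop
    simpa using (tendsto_const_nhds.add h).inv₀ (by norm_num : (1 : ℝ) + 0 ≠ 0)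
  refine tendsto_of_tendsto_of_tendsto_of_le_of_le' hcorr tendsto_const_nhds ?_ ?_ <;>
    filter_upwards [eventually_gt_atTop 0] with c hc <;>
    have hM : 0 < exp (-a * c ^ 2) / (2 * a * c) := by positivity
  · rw [Pi.div_apply, inv_le_iff_one_le_mul₀ (by positivity), div_mul_eq_mul_div, le_div_iff₀ hM]
    linarith [le_one_add_mul_integral_Ioi_exp_neg_mul_sq ha hc]
  · rw [Pi.div_apply, div_le_one hM]
    exact integral_Ioi_exp_neg_mul_sq_le ha hc

lemma tendsto_integral_Ioi_exp_neg_mul_sq_div {α : Type*} {l : Filter α} {s t : α → ℝ} {c : ℝ}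
    (ha : 0 < a) (hs : Tendsto s l atTop) (ht : Tendsto t l atTop)
    (hst : Tendsto (fun y => t y ^ 2 - s y ^ 2) l (𝓝 c)) :
    Tendsto (fun y => (∫ x in Ioi (t y), exp (-a * x ^ 2)) / ∫ x in Ioi (s y), exp (-a * x ^ 2))
      l (𝓝 (exp (-a * c))) := by
  have hE := integral_Ioi_exp_neg_mul_sq_isEquivalent ha
  refine ((hE.comp_tendsto ht).div (hE.comp_tendsto hs)).symm.tendsto_nhds ?_
  have hratio : Tendsto (fun y => s y / t y) l (𝓝 1) := by
    have h := hst.div_atTop (ht.atTop_mul_atTop₀ (ht.atTop_add_atTop hs))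
    refine (by simpa using tendsto_const_nhds.sub h : Tendsto _ l (𝓝 (1 : ℝ))).congr' ?_
    filter_upwards [hs.eventually_gt_atTop 0, ht.eventually_gt_atTop 0] with y hs0 ht0
    field_simp
    ring
  have hexp := (continuous_exp.tendsto _).comp (hst.const_mul (-a))
  have hlim := hexp.mul hratio
  rw [mul_one] at hlim
  refine hlim.congr' ?_
  filter_upwards [hs.eventually_gt_atTop 0, ht.eventually_gt_atTop 0] with y hs0 ht0
  simp only [Function.comp_apply, Pi.div_apply]
  rw [mul_sub, exp_sub]
  field_simp

lemma gaussianReal_Ioi_toReal {v : NNReal} (hv : v ≠ 0) (c : ℝ) :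
    (gaussianReal 0 v (Ioi c)).toReal
      = (√(2 * π * v))⁻¹ * ∫ x in Ioi c, exp (-(2 * v : ℝ)⁻¹ * x ^ 2) := by
  rw [gaussianReal_apply_eq_integral 0 hv, ENNReal.toReal_ofReal
    (integral_nonneg fun x => gaussianPDFReal_nonneg 0 v x), ← integral_const_mul]
  congr 1 with x
  rw [gaussianPDFReal, sub_zero, neg_div, div_eq_inv_mul, neg_mul]

lemma tendsto_gaussianReal_Ioi_div {α : Type*} {l : Filter α} {s t : α → ℝ} {c : ℝ} {v : NNReal}
    (hv : v ≠ 0) (hs : Tendsto s l atTop) (ht : Tendsto t l atTop)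
    (hst : Tendsto (fun y => t y ^ 2 - s y ^ 2) l (𝓝 c)) :
    Tendsto (fun y => (gaussianReal 0 v (Ioi (t y))).toReal / (gaussianReal 0 v (Ioi (s y))).toReal)
      l (𝓝 (exp (-(2 * v : ℝ)⁻¹ * c))) := by
  simp_rw [gaussianReal_Ioi_toReal hv, mul_div_mul_left _ _ (by positivity : (√(2 * π * v))⁻¹ ≠ 0)]
  exact tendsto_integral_Ioi_exp_neg_mul_sq_div (by positivity) hs ht hst

end GaussianTail

section ConditionAPlus

variable {f : ℝ → ℝ}

lemma exists_abs_sub_le_mul_abs_sq_sub_sq (hf : Differentiable ℝ f)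
    (hf' : Tendsto (fun x => deriv f x / x) atTop (𝓝 0)) {ε : ℝ} (hε : 0 < ε) :
    ∃ S, ∀ p q, S ≤ p → S ≤ q → |f q - f p| ≤ ε * |q ^ 2 - p ^ 2| := by
  obtain ⟨S, hS⟩ := eventually_atTop.1
    ((eventually_gt_atTop 0).and (hf'.eventually (Metric.closedBall_mem_nhds 0 hε)))
  refine ⟨S, fun p q hp hq => ?_⟩
  wlog hpq : p ≤ q generalizing p q
  · rw [abs_sub_comm, abs_sub_comm (q ^ 2)]
    exact this q p hq hp (le_of_not_ge hpq)
  have hp0 : 0 < p := (hS p hp).1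
  have hderiv : ∀ x ∈ Icc p q, ‖deriv f x‖ ≤ ε * q := fun x hx => by
    obtain ⟨hx0, hdx⟩ := hS x (hp.trans hx.1)
    rw [dist_zero_right, norm_div, Real.norm_of_nonneg hx0.le, div_le_iff₀ hx0] at hdx
    exact hdx.trans (by gcongr; exact hx.2)
  have hmvt := (convex_Icc p q).norm_image_sub_le_of_norm_deriv_le (fun x _ => hf x) hderiv
    (left_mem_Icc.2 hpq) (right_mem_Icc.2 hpq)
  rw [Real.norm_eq_abs, Real.norm_eq_abs, abs_of_nonneg (sub_nonneg.2 hpq)] at hmvt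
  rw [abs_of_nonneg (show 0 ≤ q ^ 2 - p ^ 2 by nlinarith)]
  nlinarith [mul_nonneg hε.le (mul_nonneg hp0.le (sub_nonneg.2 hpq))]

lemma isLittleO_sub_comp_sq_sub_sq (hf : Differentiable ℝ f)
    (hf' : Tendsto (fun x => deriv f x / x) atTop (𝓝 0)) {α : Type*} {l : Filter α}
    {s t : α → ℝ} (hs : Tendsto s l atTop) (ht : Tendsto t l atTop) :
    (fun y => f (t y) - f (s y)) =o[l] fun y => t y ^ 2 - s y ^ 2 := by
  refine isLittleO_iff.2 fun ε hε => ?_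
  obtain ⟨S, hS⟩ := exists_abs_sub_le_mul_abs_sq_sub_sq hf hf' hε
  filter_upwards [hs.eventually_ge_atTop S, ht.eventually_ge_atTop S] with y hsy hty
  exact hS _ _ hsy hty

variable {r : ℝ → ℝ} {b : ℝ}

lemma tendsto_sq_sub_sq_of_tendsto_sub (hb : b ≠ 0) (hf : Differentiable ℝ f)
    (hf' : Tendsto (fun x => deriv f x / x) atTop (𝓝 0)) (hr : Tendsto r atTop (𝓝 0))
    {α : Type*} {l : Filter α} {s t : α → ℝ} {c : ℝ} (hs : Tendsto s l atTop)
    (ht : Tendsto t l atTop)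
    (hst : Tendsto (fun y => (b * t y ^ 2 + f (t y) + r (t y)) - (b * s y ^ 2 + f (s y) + r (s y)))
      l (𝓝 c)) :
    Tendsto (fun y => t y ^ 2 - s y ^ 2) l (𝓝 (c / b)) := by
  have hequiv : (fun y => f (t y) - f (s y) + b * (t y ^ 2 - s y ^ 2)) ~[l]
      fun y => b * (t y ^ 2 - s y ^ 2) :=
    ((isLittleO_sub_comp_sq_sub_sq hf hf' hs ht).const_mul_right hb).add_isEquivalent
      IsEquivalent.refl
  have hmain : Tendsto (fun y => f (t y) - f (s y) + b * (t y ^ 2 - s y ^ 2)) l (𝓝 c) := by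
    have hdr := (hr.comp ht).sub (hr.comp hs)
    rw [sub_zero] at hdr
    simpa using (hst.sub hdr).congr fun y => by simp only [Function.comp_apply]; ring
  simpa [mul_div_cancel_left₀ _ hb] using (hequiv.tendsto_nhds hmain).div_const b

lemma tendsto_atTop_of_conditionAPlus (hb : 0 < b) (hf : Differentiable ℝ f)
    (hf' : Tendsto (fun x => deriv f x / x) atTop (𝓝 0)) (hr : Tendsto r atTop (𝓝 0)) :
    Tendsto (fun x => b * x ^ 2 + f x + r x) atTop atTop := by
  obtain ⟨S, hS⟩ := exists_abs_sub_le_mul_abs_sq_sub_sq hf hf' (half_pos hb)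
  have hquad : Tendsto (fun x : ℝ => b / 2 * x ^ 2 + (f S - b / 2 * S ^ 2 - 1)) atTop atTop :=
    tendsto_atTop_add_const_right _ _
      ((tendsto_pow_atTop two_ne_zero).const_mul_atTop (half_pos hb))
  refine tendsto_atTop_mono' atTop ?_ hquad
  filter_upwards [eventually_ge_atTop S, hr.eventually (Ioi_mem_nhds neg_one_lt_zero)]
    with x hx (hrx : -1 < r x)
  have hfx := hS S x le_rfl hx
  have : |x ^ 2 - S ^ 2| ≤ x ^ 2 + S ^ 2 := by
    rw [abs_le]; constructor <;> nlinarith [sq_nonneg x, sq_nonneg S]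
  nlinarith [abs_le.1 hfx]

end ConditionAPlus

lemma StrictMono.exists_tendsto_atTop_apply_eq {h : ℝ → ℝ} (hmono : StrictMono h)
    (hcont : Continuous h) (htop : Tendsto h atTop atTop) :
    ∃ g : ℝ → ℝ, Tendsto g atTop atTop ∧ ∀ᶠ y in atTop, h (g y) = y := by
  have hsurj : ∀ y, h 0 ≤ y → ∃ x, h x = y := fun y hy => by
    obtain ⟨x, -, hx⟩ := intermediate_value_Ici hcont.continuousOn htop hy
    exact ⟨x, hx⟩
  choose! g hg using hsurj
  refine ⟨g, Filter.tendsto_atTop.2 fun M => ?_, eventually_atTop.2 ⟨h 0, hg⟩⟩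
  filter_upwards [eventually_ge_atTop (h M), eventually_ge_atTop (h 0)] with y hMy h0y
  rwa [← hmono.le_iff_le, hg y h0y]

lemma StrictMono.preimage_Ioi_apply {h : ℝ → ℝ} (hmono : StrictMono h) (x : ℝ) :
    h ⁻¹' Ioi (h x) = Ioi x := by
  ext z
  exact hmono.lt_iff_lt

theorem transformed_gaussian_right_tail_regularly_varying_general
    {Ω : Type*} [MeasurableSpace Ω] (μ : Measure Ω)
    (σ : ℝ) (hσ : 0 < σ)
    (Z : Ω → ℝ) (hZmeas : Measurable Z)
    (hZlaw : μ.map Z = gaussianReal 0 ⟨σ ^ 2, sq_nonneg σ⟩)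
    (h : ℝ → ℝ) (hmono : StrictMono h) (hcont : Continuous h)
    (b : ℝ) (hb : 0 < b)
    (f r : ℝ → ℝ)
    (hf : Differentiable ℝ f)
    (hf' : Tendsto (fun x => deriv f x / x) atTop (nhds 0))
    (hr : Tendsto r atTop (nhds 0))
    (hrep : ∀ᶠ x in atTop, h x = Real.exp (b * x ^ 2 + f x + r x)) :
    ∀ l : ℝ, 0 < l →
      Tendsto
        (fun y => (μ {ω | h (Z ω) > l * y}).toReal / (μ {ω | h (Z ω) > y}).toReal)
        atTop (nhds (l ^ (-(1 / (2 * b * σ ^ 2))))) := by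
  intro l hl
  have htop := (tendsto_exp_atTop.comp (tendsto_atTop_of_conditionAPlus hb hf hf' hr)).congr'
    (hrep.mono fun x hx => hx.symm)
  obtain ⟨g, hg, hhg⟩ := hmono.exists_tendsto_atTop_apply_eq hcont htop
  have hly : Tendsto (fun y => l * y) atTop atTop := tendsto_id.const_mul_atTop hl
  have hlog : ∀ᶠ y in atTop, b * g y ^ 2 + f (g y) + r (g y) = log y := by
    filter_upwards [hhg, hg.eventually hrep] with y hy hrepy
    rw [← log_exp (b * g y ^ 2 + f (g y) + r (g y)), ← hrepy, hy]
  have hsq : Tendsto (fun y => g (l * y) ^ 2 - g y ^ 2) atTop (𝓝 (log l / b)) := by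
    refine tendsto_sq_sub_sq_of_tendsto_sub hb.ne' hf hf' hr hg (hg.comp hly)
      (tendsto_const_nhds.congr' ?_)
    filter_upwards [hlog, hly.eventually hlog, eventually_gt_atTop 0] with y hy hly' hy0
    rw [hly', hy, log_mul hl.ne' hy0.ne', add_sub_cancel_right]
  have hv : (⟨σ ^ 2, sq_nonneg σ⟩ : NNReal) ≠ 0 :=
    fun h0 => (pow_pos hσ 2).ne' (congrArg NNReal.toReal h0)
  have htail : ∀ᶠ y in atTop,
      μ {ω | h (Z ω) > y} = gaussianReal 0 ⟨σ ^ 2, sq_nonneg σ⟩ (Ioi (g y)) := by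
    filter_upwards [hhg] with y hy
    rw [← hZlaw, ← hmono.preimage_Ioi_apply, hy,
      Measure.map_apply hZmeas (measurableSet_Ioi.preimage hcont.measurable)]
    rfl
  have hexp : exp (-(2 * σ ^ 2)⁻¹ * (log l / b)) = l ^ (-(1 / (2 * b * σ ^ 2))) := by
    rw [rpow_def_of_pos hl]; congr 1; field_simp
  rw [← hexp]
  refine (tendsto_gaussianReal_Ioi_div hv hg (hg.comp hly) hsq).congr' ?_
  filter_upwards [htail, hly.eventually htail] with y hy hly'
  rw [hy, hly']
  rfl

/-- If `Z ~ N(0, σ²)` and `h` is strictly increasing, continuous and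
satisfies condition [A₊] with parameter `b > 0`, then the right tail of the distribution
of `h(Z)` is regularly varying at infinity with index `-β₊`, `β₊ = 1/(2bσ²)`. -/
theorem transformed_gaussian_right_tail_regularly_varying
    {Ω : Type*} [MeasurableSpace Ω] (μ : Measure Ω) [IsProbabilityMeasure μ]
    (σ : ℝ) (hσ : 0 < σ)
    (Z : Ω → ℝ) (hZmeas : Measurable Z)
    (hZlaw : μ.map Z = gaussianReal 0 ⟨σ ^ 2, sq_nonneg σ⟩)
    (h : ℝ → ℝ) (hmono : StrictMono h) (hcont : Continuous h)
    (b : ℝ) (hb : 0 < b)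
    (f r : ℝ → ℝ)
    (hf : Differentiable ℝ f)
    (hf' : Tendsto (fun x => deriv f x / x) atTop (nhds 0))
    (hr : Tendsto r atTop (nhds 0))
    (hrep : ∀ᶠ x in atTop, h x = Real.exp (b * x ^ 2 + f x + r x)) :
    ∀ l : ℝ, 0 < l →
      Tendsto
        (fun y => (μ {ω | h (Z ω) > l * y}).toReal / (μ {ω | h (Z ω) > y}).toReal)
        atTop (nhds (l ^ (-(1 / (2 * b * σ ^ 2))))) :=
  transformed_gaussian_right_tail_regularly_varying_general μ σ hσ Z hZmeas hZlaw h hmono hcont b hb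
    f r hf hf' hr hrep
end

section
/- Let σ > 0 and let Z be a real Gaussian random variable with mean 0 and variance σ². Let h : ℝ → ℝ be strictly increasing and continuous and satisfy condition [A₋] with parameter b₋ > 0. Then the left tail of the distribution of Y = h(Z) is regularly varying at infinity with index −β₋, where β₋ = 1/(2 b₋ σ²): that is, for every λ > 0, P(h(Z) ≤ −λy) / P(h(Z) ≤ −y) → λ^{−β₋} as y → ∞. -/
/-!
Write `Q x = b x² + f x`, so that `h x = -exp (Q x + r x)` near `-∞`. For large `y` let `u y`
solve `h (u y) = -y` and put `w y = u (l y)`; then `P(h Z ≤ -y) = Φ (u y)` for the `N(0, σ²)`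
distribution function `Φ`, and `Q (w y) - Q (u y) → log l`. Since `Q' x / x → 2b`, the mean
value theorem gives `w - u → 0` and `w² - u² → log l / b`. Mills' ratio `Φ t ~ σ² / |t| · φ t`
as `t → -∞` then gives `Φ (w y) / Φ (u y) → exp (-log l / (2bσ²)) = l ^ (-1 / (2bσ²))`.
-/

open MeasureTheory ProbabilityTheory Filter Real Set Asymptotics Topology
open scoped NNReal

namespace ProbabilityTheory

lemma hasDerivAt_gaussianPDFReal (μ : ℝ) (v : ℝ≥0) (x : ℝ) :
    HasDerivAt (gaussianPDFReal μ v) (-(x - μ) / v * gaussianPDFReal μ v x) x := by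
  have hexp : HasDerivAt (fun x => -(x - μ) ^ 2 / (2 * (v : ℝ))) (-(x - μ) / v) x :=
    ((((hasDerivAt_id x).sub_const μ).pow 2).neg.div_const (2 * (v : ℝ))).congr_deriv
      (by simp only [id, Nat.cast_ofNat]; ring)
  refine (hexp.exp.const_mul (√(2 * π * v))⁻¹).congr_deriv ?_
  rw [gaussianPDFReal]
  ring

lemma tendsto_gaussianPDFReal_atBot (μ : ℝ) {v : ℝ≥0} (hv : v ≠ 0) :
    Tendsto (gaussianPDFReal μ v) atBot (𝓝 0) := by
  have hsq : Tendsto (fun x => (x - μ) ^ 2) atBot atTop :=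
    ((tendsto_pow_atTop two_ne_zero).comp (tendsto_neg_atBot_atTop.comp
      (tendsto_atBot_add_const_right _ (-μ) tendsto_id))).congr fun x => by
        simp only [Function.comp_apply, id]; ring
  have hexp := tendsto_exp_atBot.comp ((tendsto_neg_atTop_atBot.comp hsq).atBot_div_const
    (mul_pos two_pos (NNReal.coe_pos.2 (pos_iff_ne_zero.2 hv))))
  simpa [gaussianPDFReal_def] using hexp.const_mul (√(2 * π * v))⁻¹

variable {v : ℝ≥0}

lemma gaussianPDFReal_div_gaussianPDFReal (hv : v ≠ 0) (x y : ℝ) :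
    gaussianPDFReal 0 v x / gaussianPDFReal 0 v y = exp (-(x ^ 2 - y ^ 2) / (2 * v)) := by
  have hc : (√(2 * π * v))⁻¹ ≠ 0 := by positivity
  rw [gaussianPDFReal, gaussianPDFReal, mul_div_mul_left _ _ hc, ← exp_sub]
  ring_nf

lemma cdf_gaussianReal_eq_integral (hv : v ≠ 0) (t : ℝ) :
    cdf (gaussianReal 0 v) t = ∫ x in Iic t, gaussianPDFReal 0 v x := by
  rw [cdf_eq_real, measureReal_def, gaussianReal_apply_eq_integral 0 hv,
    ENNReal.toReal_ofReal (setIntegral_nonneg measurableSet_Iic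
      fun x _ => gaussianPDFReal_nonneg 0 v x)]

lemma integrableOn_one_add_div_sq_mul_gaussianPDFReal {t : ℝ} (ht : t < 0) :
    IntegrableOn (fun x => (1 + v / x ^ 2) * gaussianPDFReal 0 v x) (Iic t) := by
  refine (integrable_gaussianPDFReal 0 v).integrableOn.bdd_mul (c := 1 + v / t ^ 2)
    (Measurable.aestronglyMeasurable (by fun_prop)) ?_
  filter_upwards [ae_restrict_mem measurableSet_Iic] with x hx
  have hsq : t ^ 2 ≤ x ^ 2 := by nlinarith [mem_Iic.1 hx]
  rw [Real.norm_of_nonneg (by positivity)]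
  gcongr 1 + ?_
  exact div_le_div_of_nonneg_left v.2 (by nlinarith) hsq

/-- Integration by parts against `x ↦ -v / x`; both Mills ratio bounds are read off from it. -/
lemma integral_Iic_one_add_div_sq_mul_gaussianPDFReal (hv : v ≠ 0) {t : ℝ} (ht : t < 0) :
    ∫ x in Iic t, (1 + v / x ^ 2) * gaussianPDFReal 0 v x = v / -t * gaussianPDFReal 0 v t := by
  have hderiv : ∀ x ∈ Iic t, HasDerivAt (fun x => -v * x⁻¹ * gaussianPDFReal 0 v x)
      ((1 + v / x ^ 2) * gaussianPDFReal 0 v x) x := by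
    intro x hx
    have hx : x ≠ 0 := (lt_of_le_of_lt hx ht).ne
    refine (((hasDerivAt_inv hx).const_mul (-(v : ℝ))).fun_mul
      (hasDerivAt_gaussianPDFReal 0 v x)).congr_deriv ?_
    field_simp
    ring
  have hlim : Tendsto (fun x => -v * x⁻¹ * gaussianPDFReal 0 v x) atBot (𝓝 0) := by
    simpa using (tendsto_inv_atBot_zero.const_mul (-(v : ℝ))).mul
      (tendsto_gaussianPDFReal_atBot 0 hv)
  rw [integral_Iic_of_hasDerivAt_of_tendsto' hderiv
    (integrableOn_one_add_div_sq_mul_gaussianPDFReal ht) hlim, sub_zero]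
  ring

lemma cdf_gaussianReal_le_of_neg (hv : v ≠ 0) {t : ℝ} (ht : t < 0) :
    cdf (gaussianReal 0 v) t ≤ v / -t * gaussianPDFReal 0 v t := by
  rw [cdf_gaussianReal_eq_integral hv, ← integral_Iic_one_add_div_sq_mul_gaussianPDFReal hv ht]
  refine setIntegral_mono_on (integrable_gaussianPDFReal 0 v).integrableOn
    (integrableOn_one_add_div_sq_mul_gaussianPDFReal ht) measurableSet_Iic fun x _ => ?_
  have := gaussianPDFReal_nonneg 0 v x
  nlinarith [show 0 ≤ (v : ℝ) / x ^ 2 by positivity]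

lemma le_cdf_gaussianReal_of_neg (hv : v ≠ 0) {t : ℝ} (ht : t < 0) :
    v / -t * gaussianPDFReal 0 v t / (1 + v / t ^ 2) ≤ cdf (gaussianReal 0 v) t := by
  rw [div_le_iff₀ (by positivity), cdf_gaussianReal_eq_integral hv,
    ← integral_Iic_one_add_div_sq_mul_gaussianPDFReal hv ht, mul_comm, ← integral_const_mul]
  refine setIntegral_mono_on (integrableOn_one_add_div_sq_mul_gaussianPDFReal ht)
    ((integrable_gaussianPDFReal 0 v).integrableOn.const_mul _) measurableSet_Iic fun x hx => ?_
  have hsq : t ^ 2 ≤ x ^ 2 := by nlinarith [mem_Iic.1 hx]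
  gcongr (1 + ?_) * _
  · exact gaussianPDFReal_nonneg 0 v x
  · exact div_le_div_of_nonneg_left v.2 (by nlinarith) hsq

lemma cdf_gaussianReal_isEquivalent_atBot (hv : v ≠ 0) :
    (fun t => cdf (gaussianReal 0 v) t) ~[atBot] fun t => v / -t * gaussianPDFReal 0 v t := by
  refine isEquivalent_of_tendsto_one ?_
  have hlower : Tendsto (fun t : ℝ => (1 + v * t⁻¹ ^ 2)⁻¹) atBot (𝓝 1) := by
    simpa using ((tendsto_inv_atBot_zero.pow 2).const_mul (v : ℝ)).const_add 1 |>.inv₀ (by simp)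
  refine tendsto_of_tendsto_of_tendsto_of_le_of_le' hlower tendsto_const_nhds ?_ ?_
  all_goals
    filter_upwards [eventually_lt_atBot 0] with t ht
    have hN : 0 < v / -t * gaussianPDFReal 0 v t :=
      mul_pos (div_pos (NNReal.coe_pos.2 (pos_iff_ne_zero.2 hv)) (neg_pos.2 ht))
        (gaussianPDFReal_pos 0 v t hv)
  · rw [Pi.div_apply, le_div_iff₀ hN, inv_mul_eq_div, inv_pow, ← div_eq_mul_inv]
    exact le_cdf_gaussianReal_of_neg hv ht
  · exact div_le_one_of_le₀ (cdf_gaussianReal_le_of_neg hv ht) hN.le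

lemma tendsto_cdf_gaussianReal_div {α : Type*} {L : Filter α} {u w : α → ℝ} {c : ℝ}
    (hv : v ≠ 0) (hu : Tendsto u L atBot) (hwu : Tendsto (fun y => w y - u y) L (𝓝 0))
    (hc : Tendsto (fun y => w y ^ 2 - u y ^ 2) L (𝓝 c)) :
    Tendsto (fun y => cdf (gaussianReal 0 v) (w y) / cdf (gaussianReal 0 v) (u y)) L
      (𝓝 (exp (-c / (2 * v)))) := by
  have hw : Tendsto w L atBot := by simpa using hu.atBot_add hwu
  have hE := cdf_gaussianReal_isEquivalent_atBot hv
  refine ((hE.comp_tendsto hw).div (hE.comp_tendsto hu)).symm.tendsto_nhds ?_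
  have huw : Tendsto (fun y => 1 - (w y - u y) / w y) L (𝓝 1) := by
    simpa using tendsto_const_nhds.sub (hwu.div_atBot hw)
  have hexp : Tendsto (fun y => exp (-(w y ^ 2 - u y ^ 2) / (2 * v))) L
      (𝓝 (exp (-c / (2 * v)))) := (continuous_exp.tendsto _).comp (hc.neg.div_const _)
  have hlim : Tendsto (fun y => (1 - (w y - u y) / w y) * exp (-(w y ^ 2 - u y ^ 2) / (2 * v))) L
      (𝓝 (exp (-c / (2 * v)))) := by
    simpa using huw.mul hexp
  refine hlim.congr' ?_
  filter_upwards [hu.eventually_lt_atBot 0, hw.eventually_lt_atBot 0] with y hu0 hw0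
  simp only [Function.comp_apply, Pi.div_apply]
  rw [mul_div_mul_comm, gaussianPDFReal_div_gaussianPDFReal hv]
  congr 1
  have : (v : ℝ) ≠ 0 := NNReal.coe_ne_zero.2 hv
  field_simp [hu0.ne, hw0.ne]
  ring

end ProbabilityTheory

lemma tendsto_atBot_of_tendsto_div_self {g : ℝ → ℝ} {a : ℝ} (ha : 0 < a)
    (hg : Tendsto (fun x => g x / x) atBot (𝓝 a)) : Tendsto g atBot atBot :=
  (tendsto_id.atBot_mul_pos ha hg).congr' <| (eventually_lt_atBot 0).mono fun x hx => by
    simp [mul_div_cancel₀ _ hx.ne]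

lemma tendsto_deriv_mul_sq_add_div {f : ℝ → ℝ} {b c : ℝ} (hf : Differentiable ℝ f)
    (hf' : Tendsto (fun x => deriv f x / x) atBot (𝓝 c)) :
    Tendsto (fun x => deriv (fun x => b * x ^ 2 + f x) x / x) atBot (𝓝 (2 * b + c)) := by
  refine (tendsto_const_nhds.add hf').congr' <| (eventually_lt_atBot 0).mono fun x hx => ?_
  dsimp only
  rw [(((hasDerivAt_pow 2 x).const_mul b).fun_add (hf x).hasDerivAt).deriv]
  field_simp [hx.ne]
  ring

section MeanValue

variable {Q : ℝ → ℝ}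

lemma exists_mem_uIcc_sub_eq_deriv_mul (hQ : Differentiable ℝ Q) (x y : ℝ) :
    ∃ ξ ∈ uIcc x y, Q y - Q x = deriv Q ξ * (y - x) := by
  wlog hxy : x ≤ y generalizing x y
  · obtain ⟨ξ, hξ, h⟩ := this y x (le_of_not_ge hxy)
    exact ⟨ξ, uIcc_comm x y ▸ hξ, by linear_combination -h⟩
  rcases hxy.eq_or_lt with rfl | hlt
  · exact ⟨x, left_mem_uIcc, by simp⟩
  obtain ⟨ξ, hξ, h⟩ :=
    exists_deriv_eq_slope Q hlt hQ.continuous.continuousOn hQ.differentiableOn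
  refine ⟨ξ, uIcc_of_le hxy ▸ Ioo_subset_Icc_self hξ, ?_⟩
  rw [h, div_mul_cancel₀ _ (sub_ne_zero.2 hlt.ne')]

lemma tendsto_atBot_atTop_of_tendsto_deriv_atBot (hQ : Differentiable ℝ Q)
    (hQ' : Tendsto (deriv Q) atBot atBot) : Tendsto Q atBot atTop := by
  obtain ⟨X, hX⟩ := eventually_atBot.1 (hQ'.eventually_le_atBot (-1))
  refine tendsto_atTop_mono' atBot ?_
    (tendsto_atTop_add_const_left _ (Q X + X) tendsto_neg_atBot_atTop)
  filter_upwards [eventually_le_atBot X] with x hx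
  have := (convex_Iic X).image_sub_le_mul_sub_of_deriv_le hQ.continuous.continuousOn
    hQ.differentiableOn (fun y hy => hX y (interior_subset (s := Iic X) hy))
    x hx X self_mem_Iic hx
  linarith

variable {α : Type*} {L : Filter α} {u w : α → ℝ}

lemma exists_tendsto_atBot_sub_eq_deriv_mul (hQ : Differentiable ℝ Q) (hu : Tendsto u L atBot)
    (hw : Tendsto w L atBot) :
    ∃ ξ : α → ℝ, Tendsto ξ L atBot ∧ (∀ y, ξ y ∈ uIcc (u y) (w y)) ∧
      ∀ y, Q (w y) - Q (u y) = deriv Q (ξ y) * (w y - u y) := by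
  choose ξ hξ hQξ using fun y => exists_mem_uIcc_sub_eq_deriv_mul hQ (u y) (w y)
  refine ⟨ξ, tendsto_atBot.2 fun M => ?_, hξ, hQξ⟩
  filter_upwards [hu.eventually_le_atBot M, hw.eventually_le_atBot M] with y huM hwM
  exact (hξ y).2.trans (max_le huM hwM)

variable {c : ℝ}

lemma tendsto_sub_of_tendsto_deriv_atBot (hQ : Differentiable ℝ Q)
    (hQ' : Tendsto (deriv Q) atBot atBot) (hu : Tendsto u L atBot) (hw : Tendsto w L atBot)
    (hc : Tendsto (fun y => Q (w y) - Q (u y)) L (𝓝 c)) :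
    Tendsto (fun y => w y - u y) L (𝓝 0) := by
  obtain ⟨ξ, hξ, -, hQξ⟩ := exists_tendsto_atBot_sub_eq_deriv_mul hQ hu hw
  have hlim : Tendsto (fun y => (Q (w y) - Q (u y)) * (deriv Q (ξ y))⁻¹) L (𝓝 0) := by
    simpa using hc.mul (hQ'.comp hξ).inv_tendsto_atBot
  refine hlim.congr' ?_
  filter_upwards [(hQ'.comp hξ).eventually_lt_atBot 0] with y hy
  have hne : deriv Q (ξ y) ≠ 0 := hy.ne
  rw [hQξ y, mul_comm, inv_mul_cancel_left₀ hne]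

lemma tendsto_sq_sub_sq_of_tendsto_deriv_div {a : ℝ} (ha : 0 < a) (hQ : Differentiable ℝ Q)
    (hQ' : Tendsto (fun x => deriv Q x / x) atBot (𝓝 a)) (hu : Tendsto u L atBot)
    (hw : Tendsto w L atBot) (hc : Tendsto (fun y => Q (w y) - Q (u y)) L (𝓝 c)) :
    Tendsto (fun y => w y ^ 2 - u y ^ 2) L (𝓝 (c * 2 / a)) := by
  have hwu := tendsto_sub_of_tendsto_deriv_atBot hQ (tendsto_atBot_of_tendsto_div_self ha hQ')
    hu hw hc
  obtain ⟨ξ, hξ, hξuw, hQξ⟩ := exists_tendsto_atBot_sub_eq_deriv_mul hQ hu hw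
  have hslope := hQ'.comp hξ
  have hdev : Tendsto (fun y => (w y - ξ y) - (ξ y - u y)) L (𝓝 0) := by
    refine squeeze_zero_norm' (a := fun y => 2 * |w y - u y|) (Eventually.of_forall fun y => ?_)
      (by simpa using hwu.abs.const_mul 2)
    have h1 := abs_sub_right_of_mem_uIcc (hξuw y)
    have h2 := abs_sub_left_of_mem_uIcc (hξuw y)
    rw [Real.norm_eq_abs]
    linarith [abs_sub (w y - ξ y) (ξ y - u y)]
  -- this is `(w + u) / ξ`
  have hmid : Tendsto (fun y => 2 + ((w y - ξ y) - (ξ y - u y)) / ξ y) L (𝓝 2) := by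
    simpa using (hdev.div_atBot hξ).const_add 2
  refine ((hc.mul hmid).div hslope ha.ne').congr' ?_
  filter_upwards [hξ.eventually_lt_atBot 0, hslope.eventually (lt_mem_nhds ha)] with y hy hpos
  have hd : deriv Q (ξ y) ≠ 0 := by
    intro h0; simp [h0] at hpos
  have hξ0 := hy.ne
  simp only [Pi.div_apply, Function.comp_apply]
  rw [hQξ y]
  field_simp
  ring

end MeanValue

lemma StrictMono.exists_tendsto_atBot_apply_eq {h : ℝ → ℝ} (hmono : StrictMono h)
    (hcont : Continuous h) (hbot : Tendsto h atBot atBot) :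
    ∃ g : ℝ → ℝ, Tendsto g atBot atBot ∧ ∀ᶠ y in atBot, h (g y) = y := by
  have hsolve : ∀ y, ∃ x, y ≤ h 0 → h x = y := by
    intro y
    by_cases hy : y ≤ h 0
    · obtain ⟨x, -, hx⟩ := intermediate_value_Iic hcont.continuousOn hbot hy
      exact ⟨x, fun _ => hx⟩
    · exact ⟨0, fun h' => absurd h' hy⟩
  choose g hg using hsolve
  have hgy : ∀ᶠ y in atBot, h (g y) = y := (eventually_le_atBot (h 0)).mono hg
  refine ⟨g, tendsto_atBot.2 fun M => ?_, hgy⟩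
  filter_upwards [hgy, eventually_le_atBot (h M)] with y hy hyM
  exact hmono.le_iff_le.1 (hy.trans_le hyM)

lemma StrictMono.exists_tendsto_atBot_apply_eq_neg_of_eq_neg_exp {h φ : ℝ → ℝ}
    (hmono : StrictMono h) (hcont : Continuous h) (hφ : Tendsto φ atBot atTop)
    (hrep : ∀ᶠ x in atBot, h x = -exp (φ x)) :
    ∃ u : ℝ → ℝ, Tendsto u atTop atBot ∧
      ∀ᶠ y in atTop, h (u y) = -y ∧ φ (u y) = log y := by
  have hh : Tendsto h atBot atBot :=
    (tendsto_neg_atTop_atBot.comp (tendsto_exp_atTop.comp hφ)).congr'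
      (hrep.mono fun x hx => hx.symm)
  obtain ⟨g, hg, hhg⟩ := hmono.exists_tendsto_atBot_apply_eq hcont hh
  have hu : Tendsto (fun y => g (-y)) atTop atBot := hg.comp tendsto_neg_atTop_atBot
  refine ⟨fun y => g (-y), hu, ?_⟩
  filter_upwards [tendsto_neg_atTop_atBot.eventually hhg, hu.eventually hrep] with y hy hyrep
  have hexp : exp (φ (g (-y))) = y := by linarith
  exact ⟨hy, by rw [← log_exp (φ (g (-y))), hexp]⟩

lemma tendsto_sub_comp_const_mul_of_add_eq_log {Q r u : ℝ → ℝ} {l : ℝ} (hl : 0 < l)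
    (hr : Tendsto r atBot (𝓝 0)) (hu : Tendsto u atTop atBot)
    (hQu : ∀ᶠ y in atTop, Q (u y) + r (u y) = log y) :
    Tendsto (fun y => Q (u (l * y)) - Q (u y)) atTop (𝓝 (log l)) := by
  have hl' : Tendsto (fun y => l * y) atTop atTop := tendsto_id.const_mul_atTop hl
  have hlim : Tendsto (fun y => log l + (r (u y) - r (u (l * y)))) atTop (𝓝 (log l)) := by
    simpa using ((hr.comp hu).sub (hr.comp (hu.comp hl'))).const_add (log l)
  refine hlim.congr' ?_
  filter_upwards [hQu, hl'.eventually hQu, eventually_gt_atTop 0] with y hQy hQly hy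
  rw [log_mul hl.ne' hy.ne'] at hQly
  linarith

lemma toReal_measure_comp_le_eq_cdf {Ω β : Type*} [MeasurableSpace Ω] [Preorder β]
    {μ : Measure Ω} {ν : Measure ℝ} [IsProbabilityMeasure ν] {Z : Ω → ℝ} (hZ : Measurable Z)
    (hZν : μ.map Z = ν) {h : ℝ → β} (hh : StrictMono h) (t : ℝ) :
    (μ {ω | h (Z ω) ≤ h t}).toReal = cdf ν t := by
  have hset : {ω | h (Z ω) ≤ h t} = Z ⁻¹' Iic t := by
    ext ω
    simp [hh.le_iff_le]
  rw [cdf_eq_real, measureReal_def, hset, ← Measure.map_apply hZ measurableSet_Iic, hZν]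

theorem transformed_gaussian_left_tail_regularly_varying_general
    {Ω : Type*} [MeasurableSpace Ω] (μ : Measure Ω)
    (σ : ℝ) (hσ : 0 < σ)
    (Z : Ω → ℝ) (hZmeas : Measurable Z)
    (hZlaw : μ.map Z = gaussianReal 0 ⟨σ ^ 2, sq_nonneg σ⟩)
    (h : ℝ → ℝ) (hmono : StrictMono h) (hcont : Continuous h)
    (b : ℝ) (hb : 0 < b)
    (f r : ℝ → ℝ)
    (hf : Differentiable ℝ f)
    (hf' : Tendsto (fun x => deriv f x / x) atBot (nhds 0))
    (hr : Tendsto r atBot (nhds 0))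
    (hrep : ∀ᶠ x in atBot, h x = -Real.exp (b * x ^ 2 + f x + r x)) :
    ∀ l : ℝ, 0 < l →
      Tendsto
        (fun y => (μ {ω | h (Z ω) ≤ -(l * y)}).toReal / (μ {ω | h (Z ω) ≤ -y}).toReal)
        atTop (nhds (l ^ (-(1 / (2 * b * σ ^ 2))))) := by
  intro l hl
  set Q : ℝ → ℝ := fun x => b * x ^ 2 + f x
  have hQ : Differentiable ℝ Q := by fun_prop
  have hQ' : Tendsto (fun x => deriv Q x / x) atBot (𝓝 (2 * b)) := by
    simpa using tendsto_deriv_mul_sq_add_div (b := b) hf hf'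
  have hQ'bot := tendsto_atBot_of_tendsto_div_self (by positivity) hQ'
  obtain ⟨u, hu, hhu⟩ := hmono.exists_tendsto_atBot_apply_eq_neg_of_eq_neg_exp hcont
    ((tendsto_atBot_atTop_of_tendsto_deriv_atBot hQ hQ'bot).atTop_add hr) hrep
  have hl' : Tendsto (fun y => l * y) atTop atTop := tendsto_id.const_mul_atTop hl
  have hw : Tendsto (fun y => u (l * y)) atTop atBot := hu.comp hl'
  have hQwu := tendsto_sub_comp_const_mul_of_add_eq_log hl hr hu (hhu.mono fun y hy => hy.2)
  set v : ℝ≥0 := ⟨σ ^ 2, sq_nonneg σ⟩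
  have hv_coe : (v : ℝ) = σ ^ 2 := rfl
  have hv : v ≠ 0 := by
    rw [ne_eq, ← NNReal.coe_eq_zero, hv_coe]
    positivity
  have hlim := tendsto_cdf_gaussianReal_div hv hu
    (tendsto_sub_of_tendsto_deriv_atBot hQ hQ'bot hu hw hQwu)
    (tendsto_sq_sub_sq_of_tendsto_deriv_div (by positivity) hQ hQ' hu hw hQwu)
  convert hlim.congr' ?_ using 2
  · rw [rpow_def_of_pos hl, hv_coe]
    congr 1
    field_simp
  · filter_upwards [hhu, hl'.eventually hhu] with y hy hly
    rw [← hy.1, ← hly.1, toReal_measure_comp_le_eq_cdf hZmeas hZlaw hmono,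
      toReal_measure_comp_le_eq_cdf hZmeas hZlaw hmono]

/-- If `Z ~ N(0, σ²)` and `h` is strictly increasing, continuous and
satisfies condition [A₋] with parameter `b > 0`, then the left tail of the distribution
of `h(Z)` is regularly varying at infinity with index `-β₋`, `β₋ = 1/(2bσ²)`. -/
theorem transformed_gaussian_left_tail_regularly_varying
    {Ω : Type*} [MeasurableSpace Ω] (μ : Measure Ω) [IsProbabilityMeasure μ]
    (σ : ℝ) (hσ : 0 < σ)
    (Z : Ω → ℝ) (hZmeas : Measurable Z)
    (hZlaw : μ.map Z = gaussianReal 0 ⟨σ ^ 2, sq_nonneg σ⟩)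
    (h : ℝ → ℝ) (hmono : StrictMono h) (hcont : Continuous h)
    (b : ℝ) (hb : 0 < b)
    (f r : ℝ → ℝ)
    (hf : Differentiable ℝ f)
    (hf' : Tendsto (fun x => deriv f x / x) atBot (nhds 0))
    (hr : Tendsto r atBot (nhds 0))
    (hrep : ∀ᶠ x in atBot, h x = -Real.exp (b * x ^ 2 + f x + r x)) :
    ∀ l : ℝ, 0 < l →
      Tendsto
        (fun y => (μ {ω | h (Z ω) ≤ -(l * y)}).toReal / (μ {ω | h (Z ω) ≤ -y}).toReal)
        atTop (nhds (l ^ (-(1 / (2 * b * σ ^ 2))))) :=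
  transformed_gaussian_left_tail_regularly_varying_general μ σ hσ Z hZmeas hZlaw h hmono hcont b hb
    f r hf hf' hr hrep
end

section
/- Let U, V, ξ, η be real random variables on a common probability space such that U, V, U₁ := U + ξ and V₁ := V + η all have continuous distribution functions. Set ε₁ := P(ξ ≠ 0) and ε₂ := P(η ≠ 0). Then |ρ_S(U₁, V₁) − ρ_S(U, V)| ≤ 18(ε₁ + ε₂) + 12 ε₁ ε₂. -/
/-!
When `F_X` is continuous, `E[F_X(X)] = 1/2`: for an independent copy `X'` this is `P(X' ≤ X)`,
and ties have probability zero. Hence replacing `(F_U(U), F_V(V))` by `(F_U₁(U₁), F_V₁(V₁))`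
preserves both means, and the change of `E[F_U(U) F_V(V)]` is at most half the sum of the
`L¹` distances of the coordinates. Off `{ξ ≠ 0}` the two distribution functions are evaluated at
the same point, where they differ by at most `P(ξ ≠ 0)`; on it they differ by at most `1`. So
`E|F_U₁(U₁) - F_U(U)| ≤ 2 ε₁`, and `|ρ_S(U₁, V₁) - ρ_S(U, V)| ≤ 12 (ε₁ + ε₂)`.
-/

open MeasureTheory ProbabilityTheory Filter Set

/-- The distribution function of a real random variable `X` on `(Ω, μ)`. -/
noncomputable def distFun {Ω : Type*} [MeasurableSpace Ω] (μ : Measure Ω)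
    (X : Ω → ℝ) : ℝ → ℝ := fun x => (μ {ω | X ω ≤ x}).toReal

/-- Spearman's rank correlation `ρ_S(U,V) = 12 (E[F_U(U) F_V(V)] - 1/4)` for random
variables with continuous distribution functions. -/
noncomputable def spearmanRho {Ω : Type*} [MeasurableSpace Ω] (μ : Measure Ω)
    (U V : Ω → ℝ) : ℝ :=
  12 * ((∫ ω, distFun μ U (U ω) * distFun μ V (V ω) ∂μ) - 1 / 4)

section NullSingleton

variable {α : Type*} [MeasurableSpace α] [LinearOrder α] [TopologicalSpace α]
  [OrderClosedTopology α] [SecondCountableTopology α] [OpensMeasurableSpace α]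
  {ν : Measure α} [IsProbabilityMeasure ν] [NullSingletonClass ν]

theorem lintegral_measure_Iic_self : ∫⁻ x, ν (Iic x) ∂ν = 2⁻¹ := by
  have hS : MeasurableSet {p : α × α | p.2 ≤ p.1} :=
    measurableSet_le measurable_snd measurable_fst
  have hlower : (ν.prod ν) {p | p.2 ≤ p.1} = ∫⁻ x, ν (Iic x) ∂ν := Measure.prod_apply hS
  have hupper : (ν.prod ν) {p | p.2 ≤ p.1}ᶜ = ∫⁻ x, ν (Iic x) ∂ν := by
    rw [Measure.prod_apply_symm hS.compl]
    refine lintegral_congr fun y => ?_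
    have hpre : (fun x => (x, y)) ⁻¹' {p : α × α | p.2 ≤ p.1}ᶜ = Iio y := by ext; simp
    rw [hpre, measure_congr Iio_ae_eq_Iic]
  have h := measure_add_measure_compl (μ := ν.prod ν) hS
  rw [hlower, hupper, measure_univ, ← two_mul] at h
  exact ENNReal.eq_inv_of_mul_eq_one_left (by rwa [mul_comm])

theorem integral_measureReal_Iic_self : ∫ x, ν.real (Iic x) ∂ν = 1 / 2 := by
  have hmeas : Measurable fun x => ν (Iic x) :=
    measurable_measure_prodMk_left (measurableSet_le measurable_snd measurable_fst)
  simp only [measureReal_def]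
  rw [integral_toReal hmeas.aemeasurable (ae_of_all _ fun _ => measure_lt_top _ _),
    lintegral_measure_Iic_self, one_div, ENNReal.toReal_inv, ENNReal.toReal_ofNat]

end NullSingleton

theorem nullSingletonClass_of_continuous_measureReal_Iic {ν : Measure ℝ} [IsProbabilityMeasure ν]
    (h : Continuous fun x => ν.real (Iic x)) : NullSingletonClass ν where
  measure_singleton a := by
    have hcdf : ⇑(cdf ν) = fun x => ν.real (Iic x) := funext (cdf_eq_real ν)
    rw [← measure_cdf ν, StieltjesFunction.measure_singleton, ContinuousWithinAt.leftLim_eq,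
      sub_self, ENNReal.ofReal_zero]
    exact (hcdf ▸ h).continuousWithinAt

section Coupling

variable {Ω : Type*} [MeasurableSpace Ω] {μ : Measure Ω} [IsFiniteMeasure μ]
  {f g f' g' : Ω → ℝ}

theorem abs_integral_mul_sub_mul_le_of_integral_eq
    (hf : Measurable f) (hg : Measurable g) (hf' : Measurable f') (hg' : Measurable g')
    (hf01 : ∀ ω, f ω ∈ unitInterval) (hg01 : ∀ ω, g ω ∈ unitInterval)
    (hf'01 : ∀ ω, f' ω ∈ unitInterval) (hg'01 : ∀ ω, g' ω ∈ unitInterval)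
    (hff' : ∫ ω, f' ω ∂μ = ∫ ω, f ω ∂μ) (hgg' : ∫ ω, g' ω ∂μ = ∫ ω, g ω ∂μ) :
    |∫ ω, f' ω * g' ω ∂μ - ∫ ω, f ω * g ω ∂μ| ≤
      (∫ ω, |f' ω - f ω| ∂μ + ∫ ω, |g' ω - g ω| ∂μ) / 2 := by
  have hint : ∀ {h : Ω → ℝ}, Measurable h → (∀ ω, h ω ∈ unitInterval) → Integrable h μ :=
    fun hm h01 => .of_mem_Icc 0 1 hm.aemeasurable (ae_of_all _ h01)
  have hcenter : ∀ {h : Ω → ℝ}, (∀ ω, h ω ∈ unitInterval) → ∀ ω, |h ω - 1 / 2| ≤ 1 / 2 :=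
    fun h01 ω => abs_le.2 ⟨by linarith [(h01 ω).1], by linarith [(h01 ω).2]⟩
  have hi := hint hf hf01
  have hi' := hint hf' hf'01
  have hj := hint hg hg01
  have hj' := hint hg' hg'01
  have hij : Integrable (fun ω => f ω * g ω) μ :=
    hint (hf.mul hg) fun ω => unitInterval.mul_mem (hf01 ω) (hg01 ω)
  have hij' : Integrable (fun ω => f' ω * g' ω) μ :=
    hint (hf'.mul hg') fun ω => unitInterval.mul_mem (hf'01 ω) (hg'01 ω)
  -- subtracting `((f' - f) + (g' - g)) / 2`, which has mean zero, makes the integrand small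
  set d : Ω → ℝ := fun ω => f' ω * g' ω - f ω * g ω - (f' ω - f ω) / 2 - (g' ω - g ω) / 2
  have hd : ∫ ω, f' ω * g' ω ∂μ - ∫ ω, f ω * g ω ∂μ = ∫ ω, d ω ∂μ := by
    simp only [d]
    rw [integral_sub, integral_sub, integral_div, integral_div, integral_sub hij' hij,
      integral_sub hi' hi, integral_sub hj' hj, hff', hgg']
    · ring
    all_goals fun_prop
  have hd_le : ∀ ω, |d ω| ≤ |f' ω - f ω| / 2 + |g' ω - g ω| / 2 := by
    intro ω
    calc |d ω| = |(f' ω - f ω) * (g' ω - 1 / 2) + (f ω - 1 / 2) * (g' ω - g ω)| := by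
          simp only [d]; ring_nf
      _ ≤ |f' ω - f ω| * |g' ω - 1 / 2| + |f ω - 1 / 2| * |g' ω - g ω| := by
          rw [← abs_mul, ← abs_mul]; exact abs_add_le _ _
      _ ≤ |f' ω - f ω| * (1 / 2) + 1 / 2 * |g' ω - g ω| := by
          gcongr
          · exact hcenter hg'01 ω
          · exact hcenter hf01 ω
      _ = _ := by ring
  have hbound : Integrable (fun ω => |f' ω - f ω| / 2 + |g' ω - g ω| / 2) μ := by fun_prop
  calc |∫ ω, f' ω * g' ω ∂μ - ∫ ω, f ω * g ω ∂μ| = |∫ ω, d ω ∂μ| := by rw [hd]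
    _ ≤ ∫ ω, |d ω| ∂μ := abs_integral_le_integral_abs
    _ ≤ ∫ ω, (|f' ω - f ω| / 2 + |g' ω - g ω| / 2) ∂μ :=
        integral_mono_of_nonneg (ae_of_all _ fun _ => abs_nonneg _) hbound (ae_of_all _ hd_le)
    _ = _ := by
        rw [integral_add, integral_div, integral_div]
        · ring
        all_goals fun_prop

end Coupling

section distFun

variable {Ω : Type*} [MeasurableSpace Ω] {μ : Measure Ω} {X ζ : Ω → ℝ}

theorem distFun_mem_unitInterval [IsProbabilityMeasure μ] (X : Ω → ℝ) (x : ℝ) :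
    distFun μ X x ∈ unitInterval :=
  ⟨measureReal_nonneg, measureReal_le_one⟩

theorem monotone_distFun [IsFiniteMeasure μ] (X : Ω → ℝ) : Monotone (distFun μ X) :=
  fun _ _ hxy => measureReal_mono fun _ hω => le_trans hω hxy

theorem measurable_distFun_comp [IsFiniteMeasure μ] (hX : Measurable X) :
    Measurable fun ω => distFun μ X (X ω) :=
  (monotone_distFun X).measurable.comp hX

theorem distFun_eq_measureReal_map (hX : Measurable X) :
    distFun μ X = fun x => (μ.map X).real (Iic x) := by
  ext x
  rw [map_measureReal_apply hX measurableSet_Iic]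
  rfl

theorem integral_distFun_comp_self [IsProbabilityMeasure μ] (hX : Measurable X)
    (hc : Continuous (distFun μ X)) : ∫ ω, distFun μ X (X ω) ∂μ = 1 / 2 := by
  have := Measure.isProbabilityMeasure_map (μ := μ) hX.aemeasurable
  rw [distFun_eq_measureReal_map hX] at hc ⊢
  have := nullSingletonClass_of_continuous_measureReal_Iic hc
  rw [← integral_map hX.aemeasurable hc.aestronglyMeasurable, integral_measureReal_Iic_self]

theorem abs_distFun_add_sub_le [IsFiniteMeasure μ] (hX : Measurable X) (hζ : Measurable ζ)
    (x : ℝ) : |distFun μ (X + ζ) x - distFun μ X x| ≤ μ.real {ω | ζ ω ≠ 0} := by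
  refine (abs_measureReal_sub_le_measureReal_symmDiff ?_ ?_).trans (measureReal_mono ?_)
  · exact (measurableSet_le (hX.add hζ) measurable_const).nullMeasurableSet
  · exact (measurableSet_le hX measurable_const).nullMeasurableSet
  · intro ω hω hζω
    simp [symmDiff, hζω, -not_le] at hω

theorem abs_distFun_add_comp_sub_le [IsProbabilityMeasure μ] (hX : Measurable X)
    (hζ : Measurable ζ) (ω : Ω) :
    |distFun μ (X + ζ) ((X + ζ) ω) - distFun μ X (X ω)| ≤
      {ω | ζ ω ≠ 0}.indicator 1 ω + μ.real {ω | ζ ω ≠ 0} := by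
  by_cases hζω : ζ ω = 0
  · have hXζ : (X + ζ) ω = X ω := by simp [hζω]
    rw [hXζ, indicator_of_notMem (by simpa using hζω), zero_add]
    exact abs_distFun_add_sub_le hX hζ (X ω)
  · rw [indicator_of_mem hζω, Pi.one_apply]
    obtain ⟨h₁, h₁'⟩ := distFun_mem_unitInterval (μ := μ) (X + ζ) ((X + ζ) ω)
    obtain ⟨h₂, h₂'⟩ := distFun_mem_unitInterval (μ := μ) X (X ω)
    have h := abs_sub_le_of_nonneg_of_le h₁ h₁' h₂ h₂'
    linarith [measureReal_nonneg (μ := μ) (s := {ω | ζ ω ≠ 0})]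

theorem integral_abs_distFun_add_comp_sub_le [IsProbabilityMeasure μ] (hX : Measurable X)
    (hζ : Measurable ζ) :
    ∫ ω, |distFun μ (X + ζ) ((X + ζ) ω) - distFun μ X (X ω)| ∂μ ≤
      2 * μ.real {ω | ζ ω ≠ 0} := by
  have hA : MeasurableSet {ω | ζ ω ≠ 0} := (hζ (measurableSet_singleton 0)).compl
  calc _ ≤ ∫ ω, ({ω | ζ ω ≠ 0}.indicator 1 ω + μ.real {ω | ζ ω ≠ 0}) ∂μ :=
        integral_mono_of_nonneg (ae_of_all _ fun _ => abs_nonneg _)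
          (((integrable_const 1).indicator hA).add (integrable_const _))
          (ae_of_all _ (abs_distFun_add_comp_sub_le hX hζ))
    _ = 2 * μ.real {ω | ζ ω ≠ 0} := by
        rw [integral_add ((integrable_const 1).indicator hA) (integrable_const _),
          integral_indicator_one hA, integral_const, probReal_univ, one_smul]
        ring

end distFun

/-- **Theorem 2 of the paper.** If `U`, `V`, `U₁ = U + ξ` and `V₁ = V + η`
are all continuously distributed, then with `ε₁ = P(ξ ≠ 0)`, `ε₂ = P(η ≠ 0)`,
`|ρ_S(U₁,V₁) - ρ_S(U,V)| ≤ 18(ε₁ + ε₂) + 12 ε₁ ε₂`. -/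
theorem spearman_perturbation_bound
    {Ω : Type*} [MeasurableSpace Ω] (μ : Measure Ω) [IsProbabilityMeasure μ]
    (U V ξ η : Ω → ℝ)
    (hU : Measurable U) (hV : Measurable V) (hξ : Measurable ξ) (hη : Measurable η)
    (hUc : Continuous (distFun μ U)) (hVc : Continuous (distFun μ V))
    (hU₁c : Continuous (distFun μ (U + ξ))) (hV₁c : Continuous (distFun μ (V + η))) :
    |spearmanRho μ (U + ξ) (V + η) - spearmanRho μ U V| ≤
      18 * ((μ {ω | ξ ω ≠ 0}).toReal + (μ {ω | η ω ≠ 0}).toReal) +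
        12 * ((μ {ω | ξ ω ≠ 0}).toReal * (μ {ω | η ω ≠ 0}).toReal) := by
  have hdiff := abs_integral_mul_sub_mul_le_of_integral_eq (μ := μ)
    (measurable_distFun_comp hU) (measurable_distFun_comp hV)
    (measurable_distFun_comp (hU.add hξ)) (measurable_distFun_comp (hV.add hη))
    (fun _ => distFun_mem_unitInterval _ _) (fun _ => distFun_mem_unitInterval _ _)
    (fun _ => distFun_mem_unitInterval _ _) (fun _ => distFun_mem_unitInterval _ _)
    (by rw [integral_distFun_comp_self (hU.add hξ) hU₁c, integral_distFun_comp_self hU hUc])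
    (by rw [integral_distFun_comp_self (hV.add hη) hV₁c, integral_distFun_comp_self hV hVc])
  have hU₁U := integral_abs_distFun_add_comp_sub_le (μ := μ) hU hξ
  have hV₁V := integral_abs_distFun_add_comp_sub_le (μ := μ) hV hη
  have hρ : spearmanRho μ (U + ξ) (V + η) - spearmanRho μ U V =
      12 * (∫ ω, distFun μ (U + ξ) ((U + ξ) ω) * distFun μ (V + η) ((V + η) ω) ∂μ -
        ∫ ω, distFun μ U (U ω) * distFun μ V (V ω) ∂μ) := by
    simp only [spearmanRho]; ring
  have hε₁ : 0 ≤ μ.real {ω | ξ ω ≠ 0} := measureReal_nonneg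
  have hε₂ : 0 ≤ μ.real {ω | η ω ≠ 0} := measureReal_nonneg
  simp only [← measureReal_def]
  rw [hρ, abs_mul, abs_of_pos (by norm_num : (0 : ℝ) < 12)]
  linarith [mul_nonneg hε₁ hε₂]
end

section
/- Let X₁, X₂, …, X_n be i.i.d. standard Gaussian random variables and let k be an integer with 1 ≤ k and n ≥ 2k + 1. Set n_k := n − k and p̂⁰_k := (1/n_k) Σ_{j=1}^{n_k} 1(X_j > 0, X_{j+k} > 0). Then E[p̂⁰_k] = 1/4 (so p̂⁰_k is an unbiased estimator of p_k := P(X_1 > 0, X_{1+k} > 0) = 1/4), and Var(p̂⁰_k) = 5/(16 n_k) − k/(8 n_k²) exactly; equivalently E[(p̂⁰_k)²] = 1/16 + 5/(16 n_k) − k/(8 n_k²). -/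
open MeasureTheory ProbabilityTheory Set
open scoped NNReal ENNReal

/-!
Write `Y_j = 1(X_j > 0, X_{j+k} > 0)`. The product `Y_j Y_l` is the indicator that `X_i > 0` for
every `i ∈ {j, j + k} ∪ {l, l + k}`, so by independence and the symmetry of the Gaussian
`E[Y_j Y_l] = 2⁻ᴺ`, where the union has `N = 2` elements if `j = l`, `N = 3` if `|j - l| = k` and
`N = 4` otherwise. Among the `n_k²` pairs `(j, l)` there are `n_k` diagonal ones and `2(n_k - k)`
at distance `k`, whence `E[(Σ Y_j)²] = n_k²/16 + 3n_k/16 + (n_k - k)/8`.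
-/

lemma measure_Ioi_zero_eq_half {ν : Measure ℝ} [IsProbabilityMeasure ν] [ν.IsNegInvariant]
    (h0 : ν {0} = 0) : ν (Ioi 0) = 1 / 2 := by
  have hIio : ν (Iio 0) = ν (Ioi 0) := by
    rw [← Measure.measure_neg, Set.neg_Iio, neg_zero]
  have hsplit : ν (Iio 0) + ν (Ioi 0) = 1 := by
    rw [← measure_union ((Iic_disjoint_Ioi le_rfl).mono_left Iio_subset_Iic_self)
      measurableSet_Ioi, Iio_union_Ioi, prob_compl_eq_one_iff (measurableSet_singleton 0), h0]
  rw [hIio, ← two_mul] at hsplit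
  rw [ENNReal.eq_div_iff (by norm_num) (by norm_num), hsplit]

instance isNegInvariant_gaussianReal_zero (v : ℝ≥0) : (gaussianReal 0 v).IsNegInvariant :=
  ⟨by rw [Measure.neg, gaussianReal_map_neg, neg_zero]⟩

lemma gaussianReal_Ioi_zero {v : ℝ≥0} (hv : v ≠ 0) : gaussianReal 0 v (Ioi 0) = 1 / 2 :=
  haveI := nullSingletonClass_gaussianReal (μ := 0) hv
  measure_Ioi_zero_eq_half (measure_singleton 0)

lemma card_pair_union_pair {k : ℕ} (hk : k ≠ 0) (j l : ℕ) :
    ({j, j + k} ∪ {l, l + k} : Finset ℕ).card =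
      if j = l then 2 else if l = j + k ∨ j = l + k then 3 else 4 := by
  split_ifs with hjl hlag
  · rw [hjl, Finset.union_self, Finset.card_pair (by omega)]
  · have hthree : ∀ i, ({i, i + k} ∪ {i + k, i + k + k} : Finset ℕ).card = 3 := fun i => by
      rw [show ({i, i + k} ∪ {i + k, i + k + k} : Finset ℕ) = {i, i + k, i + k + k} by
        ext; simp only [Finset.mem_union, Finset.mem_insert, Finset.mem_singleton]; tauto,
        Finset.card_insert_of_notMem (by simp; omega), Finset.card_pair (by omega)]
    rcases hlag with rfl | rfl
    · exact hthree j
    · rw [Finset.union_comm]; exact hthree l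
  · rw [Finset.card_union_of_disjoint (by simp; omega), Finset.card_pair (by omega),
      Finset.card_pair (by omega)]

lemma pow_card_pair_union_pair {R : Type*} [CommRing R] {k : ℕ} (hk : k ≠ 0) (q : R)
    (j l : ℕ) :
    q ^ ({j, j + k} ∪ {l, l + k} : Finset ℕ).card =
      q ^ 4 + (if j = l then q ^ 2 - q ^ 4 else 0) + (if l = j + k then q ^ 3 - q ^ 4 else 0) +
        (if j = l + k then q ^ 3 - q ^ 4 else 0) := by
  rw [card_pair_union_pair hk]
  split_ifs <;> first | omega | ring

lemma sum_Icc_sum_Icc_ite_eq_add {M : Type*} [AddCommMonoid M] (m k : ℕ) (c : M) :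
    ∑ j ∈ Finset.Icc 1 m, ∑ l ∈ Finset.Icc 1 m, (if l = j + k then c else 0) = (m - k) • c := by
  simp_rw [Finset.sum_ite_eq']
  rw [← Finset.sum_filter, Finset.sum_const]
  congr 1
  rw [show {j ∈ Finset.Icc 1 m | j + k ∈ Finset.Icc 1 m} = Finset.Icc 1 (m - k) by
    ext; simp; omega, Nat.card_Icc]
  omega

lemma sum_Icc_sum_Icc_pow_card_pair_union_pair {R : Type*} [CommRing R] {k : ℕ} (hk : k ≠ 0)
    (q : R) (m : ℕ) :
    ∑ j ∈ Finset.Icc 1 m, ∑ l ∈ Finset.Icc 1 m, q ^ ({j, j + k} ∪ {l, l + k} : Finset ℕ).card =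
      m ^ 2 * q ^ 4 + m * (q ^ 2 - q ^ 4) + 2 * (m - k : ℕ) * (q ^ 3 - q ^ 4) := by
  simp_rw [pow_card_pair_union_pair hk, Finset.sum_add_distrib, Finset.sum_ite_eq]
  rw [Finset.sum_comm (f := fun j l => if j = l + k then q ^ 3 - q ^ 4 else 0),
    sum_Icc_sum_Icc_ite_eq_add]
  simp only [Finset.sum_const, Finset.sum_ite_mem, Finset.inter_self, Nat.card_Icc,
    nsmul_eq_mul, Nat.add_sub_cancel]
  ring

lemma integral_finsetSum_sq {Ω ι : Type*} [MeasurableSpace Ω] {μ : Measure Ω}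
    {f : ι → Ω → ℝ} (s : Finset ι)
    (hf : ∀ j ∈ s, ∀ l ∈ s, Integrable (fun ω => f j ω * f l ω) μ) :
    ∫ ω, (∑ j ∈ s, f j ω) ^ 2 ∂μ = ∑ j ∈ s, ∑ l ∈ s, ∫ ω, f j ω * f l ω ∂μ := by
  simp_rw [sq, Finset.sum_mul_sum]
  rw [integral_finsetSum _ fun j hj => integrable_finsetSum _ fun l hl => hf j hj l hl]
  exact Finset.sum_congr rfl fun j hj => integral_finsetSum _ fun l hl => hf j hj l hl

section PosIndicator

variable {Ω ι : Type*} {X : ι → Ω → ℝ}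

noncomputable def posIndicator (X : ι → Ω → ℝ) (S : Finset ι) : Ω → ℝ :=
  {ω | ∀ i ∈ S, 0 < X i ω}.indicator 1

lemma posIndicator_pair [DecidableEq ι] (i j : ι) (ω : Ω) :
    posIndicator X {i, j} ω = if 0 < X i ω ∧ 0 < X j ω then 1 else 0 := by
  simp [posIndicator, Set.indicator_apply]

lemma posIndicator_union [DecidableEq ι] (S T : Finset ι) :
    posIndicator X (S ∪ T) = posIndicator X S * posIndicator X T := by
  rw [posIndicator, posIndicator, posIndicator, ← Set.inter_indicator_one]
  congr 1
  ext ω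
  simp [or_imp, forall_and]

variable [MeasurableSpace Ω] {μ : Measure Ω}

lemma measurableSet_forall_pos (hX : ∀ i, Measurable (X i)) (S : Finset ι) :
    MeasurableSet {ω | ∀ i ∈ S, 0 < X i ω} := by
  simpa only [Set.ofPred_forall] using
    .biInter S.countable_toSet fun i _ => measurableSet_lt measurable_const (hX i)

lemma ProbabilityTheory.iIndepFun.measure_forall_pos (hind : iIndepFun X μ) {p : ℝ≥0∞}
    (hp : ∀ i, μ {ω | 0 < X i ω} = p) (S : Finset ι) :
    μ {ω | ∀ i ∈ S, 0 < X i ω} = p ^ S.card := by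
  have hS : {ω | ∀ i ∈ S, 0 < X i ω} = ⋂ i ∈ S, X i ⁻¹' Ioi 0 := by ext; simp
  rw [hS, hind.measure_inter_preimage_eq_mul S fun _ _ => measurableSet_Ioi,
    ← Finset.prod_const]
  exact Finset.prod_congr rfl fun i _ => hp i

lemma ProbabilityTheory.iIndepFun.integral_posIndicator [IsFiniteMeasure μ]
    (hind : iIndepFun X μ) (hX : ∀ i, Measurable (X i)) {p : ℝ≥0∞}
    (hp : ∀ i, μ {ω | 0 < X i ω} = p) (S : Finset ι) :
    ∫ ω, posIndicator X S ω ∂μ = p.toReal ^ S.card := by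
  rw [posIndicator, integral_indicator_one (measurableSet_forall_pos hX S), measureReal_def,
    hind.measure_forall_pos hp, ENNReal.toReal_pow]

lemma memLp_posIndicator [IsFiniteMeasure μ] (hX : ∀ i, Measurable (X i)) (q : ℝ≥0∞)
    (S : Finset ι) : MemLp (posIndicator X S) q μ :=
  memLp_indicator_const q (measurableSet_forall_pos hX S) 1 (.inr (measure_ne_top _ _))

end PosIndicator

section LagPairs

variable {Ω : Type*} [MeasurableSpace Ω] {μ : Measure Ω} [IsProbabilityMeasure μ]
  {X : ℕ → Ω → ℝ} {k m : ℕ}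

/-- The estimator `p̂⁰_k` of the paper, with `m = n_k`. -/
noncomputable def lagPairMean (X : ℕ → Ω → ℝ) (k m : ℕ) (ω : Ω) : ℝ :=
  (m : ℝ)⁻¹ * ∑ j ∈ Finset.Icc 1 m, posIndicator X {j, j + k} ω

lemma memLp_lagPairMean (hX : ∀ i, Measurable (X i)) (q : ℝ≥0∞) :
    MemLp (lagPairMean X k m) q μ :=
  (memLp_finsetSum _ fun _ _ => memLp_posIndicator hX q _).const_mul _

variable {p : ℝ≥0∞}

lemma integral_lagPairMean (hind : iIndepFun X μ) (hX : ∀ i, Measurable (X i))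
    (hp : ∀ i, μ {ω | 0 < X i ω} = p) (hk : k ≠ 0) (hm : m ≠ 0) :
    ∫ ω, lagPairMean X k m ω ∂μ = p.toReal ^ 2 := by
  have hcard : ∀ j, ({j, j + k} : Finset ℕ).card = 2 := fun j => Finset.card_pair (by omega)
  simp only [lagPairMean]
  rw [integral_const_mul,
    integral_finsetSum _ fun j _ => (memLp_posIndicator hX 1 _).integrable le_rfl]
  simp only [hind.integral_posIndicator hX hp, hcard, Finset.sum_const, Nat.card_Icc,
    nsmul_eq_mul, Nat.add_sub_cancel]
  field_simp

lemma integral_lagPairMean_sq (hind : iIndepFun X μ) (hX : ∀ i, Measurable (X i))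
    (hp : ∀ i, μ {ω | 0 < X i ω} = p) (hk : k ≠ 0) (hkm : k ≤ m) :
    ∫ ω, lagPairMean X k m ω ^ 2 ∂μ = p.toReal ^ 4 + (p.toReal ^ 2 - p.toReal ^ 4) / m +
      2 * (m - k) * (p.toReal ^ 3 - p.toReal ^ 4) / m ^ 2 := by
  have hm : (m : ℝ) ≠ 0 := Nat.cast_ne_zero.2 (by omega)
  have hprod (S T : Finset ℕ) :
      Integrable (fun ω => posIndicator X S ω * posIndicator X T ω) μ := by
    have h := (memLp_posIndicator hX 1 (S ∪ T) (μ := μ)).integrable le_rfl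
    rwa [posIndicator_union] at h
  simp_rw [lagPairMean, mul_pow]
  rw [integral_const_mul, integral_finsetSum_sq _ fun j _ l _ => hprod _ _]
  simp_rw [← Pi.mul_apply, ← posIndicator_union, hind.integral_posIndicator hX hp]
  rw [sum_Icc_sum_Icc_pow_card_pair_union_pair hk, Nat.cast_sub hkm]
  field_simp

lemma variance_lagPairMean (hind : iIndepFun X μ) (hX : ∀ i, Measurable (X i))
    (hp : ∀ i, μ {ω | 0 < X i ω} = p) (hk : k ≠ 0) (hkm : k ≤ m) :
    variance (lagPairMean X k m) μ = (p.toReal ^ 2 - p.toReal ^ 4) / m +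
      2 * (m - k) * (p.toReal ^ 3 - p.toReal ^ 4) / m ^ 2 := by
  rw [variance_eq_sub (memLp_lagPairMean hX 2)]
  simp only [Pi.pow_apply]
  rw [integral_lagPairMean_sq hind hX hp hk hkm, integral_lagPairMean hind hX hp hk (by omega)]
  ring

end LagPairs

/-- For i.i.d. standard Gaussian `X₁, …, X_n` and `1 ≤ k`,
`n ≥ 2k + 1`, with `n_k = n - k` and
`p̂⁰_k = (1/n_k) Σ_{j=1}^{n_k} 1(X_j > 0, X_{j+k} > 0)`, one has `E[p̂⁰_k] = 1/4`
(unbiasedness for `p_k = P(X₁ > 0, X_{1+k} > 0) = 1/4`),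
`E[(p̂⁰_k)²] = 1/16 + 5/(16 n_k) - k/(8 n_k²)`, and hence
`Var(p̂⁰_k) = 5/(16 n_k) - k/(8 n_k²)` exactly. -/
theorem pHat_iid_mean_and_variance
    {Ω : Type*} [MeasurableSpace Ω] (μ : Measure Ω) [IsProbabilityMeasure μ]
    (X : ℕ → Ω → ℝ)
    (hXmeas : ∀ i, Measurable (X i))
    (hXlaw : ∀ i, μ.map (X i) = gaussianReal 0 1)
    (hindep : iIndepFun X μ)
    (k n : ℕ) (hk : 1 ≤ k) (hn : 2 * k + 1 ≤ n)
    (phat : Ω → ℝ)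
    (hphat : phat = fun ω => (1 / ((n : ℝ) - k)) *
      ∑ j ∈ Finset.Icc 1 (n - k), (if 0 < X j ω ∧ 0 < X (j + k) ω then (1 : ℝ) else 0)) :
    (μ {ω | 0 < X 1 ω ∧ 0 < X (1 + k) ω}).toReal = 1 / 4 ∧
    (∫ ω, phat ω ∂μ) = 1 / 4 ∧
    (∫ ω, (phat ω) ^ 2 ∂μ) =
      1 / 16 + 5 / (16 * ((n : ℝ) - k)) - k / (8 * ((n : ℝ) - k) ^ 2) ∧
    variance phat μ = 5 / (16 * ((n : ℝ) - k)) - k / (8 * ((n : ℝ) - k) ^ 2) := by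
  have hhalf : ∀ i, μ {ω | 0 < X i ω} = 1 / 2 := fun i => by
    change μ (X i ⁻¹' Ioi 0) = 1 / 2
    rw [← Measure.map_apply (hXmeas i) measurableSet_Ioi, hXlaw i,
      gaussianReal_Ioi_zero one_ne_zero]
  have hm : ((n - k : ℕ) : ℝ) = n - k := Nat.cast_sub (by omega)
  have hm0 : (n : ℝ) - k ≠ 0 := by rw [← hm]; exact Nat.cast_ne_zero.2 (by omega)
  have hphat' : phat = lagPairMean X k (n - k) := by
    ext ω
    simp only [hphat, lagPairMean, hm, one_div, posIndicator_pair]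
  subst hphat'
  have hk0 : k ≠ 0 := by omega
  have hkm : k ≤ n - k := by omega
  have hmean := integral_lagPairMean hindep hXmeas hhalf hk0 (m := n - k) (by omega)
  have hsecond := integral_lagPairMean_sq hindep hXmeas hhalf hk0 hkm
  have hvar := variance_lagPairMean hindep hXmeas hhalf hk0 hkm
  have hhalf_toReal : (1 / 2 : ℝ≥0∞).toReal = 1 / 2 := by norm_num
  rw [hhalf_toReal] at hmean
  rw [hhalf_toReal, hm] at hsecond hvar
  have hpair : {ω | 0 < X 1 ω ∧ 0 < X (1 + k) ω} =
      {ω | ∀ i ∈ ({1, 1 + k} : Finset ℕ), 0 < X i ω} := by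
    ext; simp
  refine ⟨?_, by rw [hmean]; norm_num, by rw [hsecond]; field_simp; ring,
    by rw [hvar]; field_simp; ring⟩
  rw [hpair, hindep.measure_forall_pos hhalf, Finset.card_pair (by omega)]
  norm_num
end

section
/- Let n be an odd integer with n ≥ 3, let k be an integer with 1 ≤ k < n, and let X₁, …, X_n be i.i.d. standard Gaussian random variables. Let m̂ := X_{ν,n} with ν = (n+1)/2 be the sample median, and set p̂_k := (1/(n−k)) Σ_{j=1}^{n−k} 1(X_j > m̂, X_{j+k} > m̂). Then E[p̂_k] = 1/4 − 3/(4n); in particular p̂_k has bias −3/(4n) = O(1/n) as an estimator of p_k := P(X_1 > 0, X_{1+k} > 0) = 1/4. -/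
open MeasureTheory ProbabilityTheory Filter Real Set

/-- The `ν`-th largest element of a multiset of reals (1-indexed), i.e. the order
statistic `X_{ν,n}` when `X_{1,n} ≥ ⋯ ≥ X_{n,n}`. -/
noncomputable def nthLargest (s : Multiset ℝ) (ν : ℕ) : ℝ :=
  (s.sort (· ≤ ·)).getD (Multiset.card s - ν) 0

/-!
The sample is exchangeable and almost surely has distinct values, so exactly `ν - 1 = (n - 1)/2`
of the `n` coordinates lie strictly above the median, and these form `(ν - 1)(ν - 2)` ordered
pairs. By exchangeability every ordered pair `(i, j)` with `i ≠ j` has the same probability of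
lying above the median, which is therefore `(ν - 1)(ν - 2) / (n (n - 1)) = 1/4 - 3/(4n)`; this
is the expectation of each summand of `p̂_k`. The value `P(X₁ > 0, X_{1+k} > 0) = 1/4` comes from
independence and the symmetry of the Gaussian law.
-/

open scoped Finset

namespace List

variable {α : Type*} [LinearOrder α]

theorem countP_le_eq_zero_of_lt {a t : α} {l : List α} (ha : ∀ x ∈ l, a ≤ x) (hat : t < a) :
    l.countP (· ≤ t) = 0 :=
  countP_eq_zero.mpr fun x hx hxt => (hat.trans_le (ha x hx)).not_ge (by simpa using hxt)

theorem Pairwise.getElem_le_iff_lt_countP {l : List α} (hl : l.Pairwise (· ≤ ·)) {i : ℕ}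
    (hi : i < l.length) (t : α) : l[i] ≤ t ↔ i < l.countP (· ≤ t) := by
  induction l generalizing i with
  | nil => simp at hi
  | cons a l ih =>
    rw [pairwise_cons] at hl
    rcases le_or_gt a t with hat | hat
    · cases i with
      | zero => simp [hat]
      | succ i => simp [ih hl.2 (Nat.lt_of_succ_lt_succ hi), hat]
    · have hzero := countP_le_eq_zero_of_lt hl.1 hat
      cases i with
      | zero => simp [hzero, hat]
      | succ i =>
        simp only [getElem_cons_succ, countP_cons, hzero, decide_eq_true_eq, not_le.mpr hat]
        simpa using hat.trans_le (hl.1 _ (getElem_mem _))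

theorem Pairwise.countP_getElem_lt {l : List α} (hl : l.Pairwise (· < ·)) {i : ℕ}
    (hi : i < l.length) : l.countP (l[i] < ·) = l.length - (i + 1) := by
  induction l generalizing i with
  | nil => simp at hi
  | cons a l ih =>
    rw [pairwise_cons] at hl
    cases i with
    | zero => simpa [countP_eq_length] using hl.1
    | succ i =>
      have hi : i < l.length := Nat.lt_of_succ_lt_succ hi
      have hai : ¬ l[i] < a := (hl.1 _ (getElem_mem _)).not_gt
      simp [ih hl.2 hi, hai]

end List

section nthLargest

variable {s : Multiset ℝ} {m : ℕ}

theorem nthLargest_eq_getElem (hm1 : 1 ≤ m) (hm : m ≤ Multiset.card s) :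
    nthLargest s m = (s.sort (· ≤ ·))[Multiset.card s - m]'(by simp; omega) :=
  List.getD_eq_getElem _ _ _

theorem nthLargest_le_iff (hm1 : 1 ≤ m) (hm : m ≤ Multiset.card s) (t : ℝ) :
    nthLargest s m ≤ t ↔ Multiset.card s - m < s.countP (· ≤ t) := by
  rw [nthLargest_eq_getElem hm1 hm, (Multiset.pairwise_sort s _).getElem_le_iff_lt_countP,
    ← Multiset.coe_countP, Multiset.sort_eq]

theorem countP_nthLargest_lt (hs : s.Nodup) (hm1 : 1 ≤ m) (hm : m ≤ Multiset.card s) :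
    s.countP (nthLargest s m < ·) = m - 1 := by
  have hnodup : (s.sort (· ≤ ·)).Nodup := by rwa [← Multiset.coe_nodup, Multiset.sort_eq]
  have hlt : (s.sort (· ≤ ·)).Pairwise (· < ·) :=
    ((Multiset.pairwise_sort s _).and hnodup).imp fun h => lt_of_le_of_ne h.1 h.2
  have hcount (p : ℝ → Prop) [DecidablePred p] : s.countP p = (s.sort (· ≤ ·)).countP p := by
    rw [← Multiset.coe_countP, Multiset.sort_eq]
  rw [hcount, nthLargest_eq_getElem hm1 hm, hlt.countP_getElem_lt, Multiset.length_sort]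
  omega

end nthLargest

theorem Finset.univ_val_map_coe {α β : Type*} (s : Finset α) (f : α → β) :
    Multiset.map (fun i : s => f i) Finset.univ.val = s.val.map f := by
  rw [Finset.univ_eq_attach]
  exact Multiset.attach_map_val' s.val f

theorem measurable_nthLargest {α ι : Type*} [MeasurableSpace α] {m : ℕ} {f : ι → α → ℝ}
    (hf : ∀ i, Measurable (f i)) (s : Finset ι) (hm1 : 1 ≤ m) (hm : m ≤ #s) :
    Measurable fun a => nthLargest (s.val.map fun i => f i a) m := by
  classical
  refine measurable_of_Iic fun c => ?_
  have hcount : Measurable fun a => ∑ i ∈ s, if f i a ≤ c then 1 else 0 :=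
    Finset.measurable_sum _ fun i _ =>
      Measurable.ite (measurableSet_le (hf i) measurable_const) measurable_const measurable_const
  convert hcount (measurableSet_Ioi (a := #s - m)) using 1
  ext a
  simp only [mem_preimage, mem_Iic, mem_Ioi]
  rw [nthLargest_le_iff hm1 (by simpa using hm), Multiset.countP_map, Multiset.card_map,
    ← Finset.card_filter]
  rfl

theorem integral_finset_sum_ite_one_zero {Ω ι : Type*} [MeasurableSpace Ω] {μ : Measure Ω}
    [IsFiniteMeasure μ] (I : Finset ι) {p : ι → Ω → Prop} [∀ j, DecidablePred (p j)]
    (hp : ∀ j ∈ I, MeasurableSet {ω | p j ω}) :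
    ∫ ω, ∑ j ∈ I, (if p j ω then (1 : ℝ) else 0) ∂μ = ∑ j ∈ I, μ.real {ω | p j ω} := by
  have hind (j : ι) : (fun ω => if p j ω then (1 : ℝ) else 0) = {ω | p j ω}.indicator 1 := by
    ext ω
    simp [Set.indicator_apply]
  rw [integral_finsetSum _ fun j hj => hind j ▸ (integrable_const 1).indicator (hp j hj)]
  exact Finset.sum_congr rfl fun j hj => by rw [hind j, integral_indicator_one (hp j hj)]

theorem ae_injective_of_measure_eq_eq_zero {ι β : Type*} [Countable ι] [MeasurableSpace β]
    {P : Measure (ι → β)} (hdist : ∀ i j, i ≠ j → P {y | y i = y j} = 0) :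
    ∀ᵐ y ∂P, Function.Injective y := by
  simp_rw [Function.Injective, ae_all_iff]
  intro i j
  by_cases hij : i = j
  · simp [hij]
  · filter_upwards [measure_eq_zero_iff_ae_notMem.mp (hdist i j hij)] with y hy heq
    exact absurd heq hy

section Exchangeable

variable {ι : Type*} [Fintype ι] {m : ℕ}

def aboveNthLargest (m : ℕ) (i : ι) : Set (ι → ℝ) :=
  {y | nthLargest (Finset.univ.val.map y) m < y i}

theorem measurableSet_aboveNthLargest (hm1 : 1 ≤ m) (hm : m ≤ Fintype.card ι) (i : ι) :
    MeasurableSet (aboveNthLargest m i) :=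
  measurableSet_lt (measurable_nthLargest measurable_pi_apply _ hm1 (by simpa using hm))
    (measurable_pi_apply i)

theorem preimage_comp_perm_aboveNthLargest (σ : Equiv.Perm ι) (i : ι) :
    (fun y : ι → ℝ => y ∘ σ) ⁻¹' aboveNthLargest m i = aboveNthLargest m (σ i) := by
  ext y
  have hperm : Finset.univ.val.map (y ∘ σ) = Finset.univ.val.map y := by
    rw [← Multiset.map_map, Multiset.map_univ_val_equiv]
  simp only [aboveNthLargest, mem_preimage, mem_ofPred_eq, Function.comp_apply, ← hperm]

open scoped Classical in
theorem card_aboveNthLargest {y : ι → ℝ} (hy : Function.Injective y)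
    (hm1 : 1 ≤ m) (hm : m ≤ Fintype.card ι) :
    #{i | y ∈ aboveNthLargest m i} = m - 1 := by
  have hnodup : (Finset.univ.val.map y).Nodup := Finset.univ.nodup.map hy
  rw [← countP_nthLargest_lt hnodup hm1 (by simpa using hm), Multiset.countP_map]
  rfl

open scoped Classical in
theorem card_offDiag_aboveNthLargest {y : ι → ℝ} (hy : Function.Injective y) (hm1 : 1 ≤ m)
    (hm : m ≤ Fintype.card ι) :
    #{p ∈ (Finset.univ : Finset ι).offDiag | y ∈ aboveNthLargest m p.1 ∩ aboveNthLargest m p.2} =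
      (m - 1) * (m - 1) - (m - 1) := by
  have hfilter :
      {p ∈ (Finset.univ : Finset ι).offDiag | y ∈ aboveNthLargest m p.1 ∩ aboveNthLargest m p.2} =
        (Finset.univ.filter fun i => y ∈ aboveNthLargest m i).offDiag := by
    ext p
    simp only [Finset.mem_filter, Finset.mem_offDiag, Finset.mem_univ, true_and, mem_inter_iff]
    tauto
  rw [hfilter, Finset.offDiag_card, card_aboveNthLargest hy hm1 hm]

variable {P : Measure (ι → ℝ)}

theorem sum_measureReal_aboveNthLargest_inter [IsProbabilityMeasure P]
    (hdist : ∀ i j, i ≠ j → P {y | y i = y j} = 0) (hm1 : 1 ≤ m) (hm : m ≤ Fintype.card ι) :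
    ∑ p ∈ Finset.univ.offDiag, P.real (aboveNthLargest m p.1 ∩ aboveNthLargest m p.2) =
      ((m - 1) * (m - 1) - (m - 1) : ℕ) := by
  classical
  have hsum := integral_finset_sum_ite_one_zero (μ := P) Finset.univ.offDiag
    (p := fun p y => y ∈ aboveNthLargest m p.1 ∩ aboveNthLargest m p.2) fun p _ =>
      (measurableSet_aboveNthLargest hm1 hm p.1).inter (measurableSet_aboveNthLargest hm1 hm p.2)
  simp only [ofPred_mem_eq] at hsum
  rw [← hsum, integral_congr_ae (g := fun _ => (((m - 1) * (m - 1) - (m - 1) : ℕ) : ℝ))]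
  · simp
  filter_upwards [ae_injective_of_measure_eq_eq_zero hdist] with y hy
  simp only [Finset.sum_boole, card_offDiag_aboveNthLargest hy hm1 hm]

theorem measure_aboveNthLargest_inter_eq (hexch : ∀ σ : Equiv.Perm ι, P.map (· ∘ σ) = P)
    (hm1 : 1 ≤ m) (hm : m ≤ Fintype.card ι) {i j i' j' : ι} (hij : i ≠ j) (hij' : i' ≠ j') :
    P (aboveNthLargest m i ∩ aboveNthLargest m j) =
      P (aboveNthLargest m i' ∩ aboveNthLargest m j') := by
  obtain ⟨σ, hσ⟩ := Equiv.Perm.exists_extending_pair (fun b : Bool => if b then i' else j')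
    (fun b => if b then i else j) (by intro a b; cases a <;> cases b <;> simp [hij'.symm, hij'])
    (by intro a b; cases a <;> cases b <;> simp [hij.symm, hij])
  have hmeas : MeasurableSet (aboveNthLargest m i' ∩ aboveNthLargest m j') :=
    (measurableSet_aboveNthLargest hm1 hm i').inter (measurableSet_aboveNthLargest hm1 hm j')
  have hi : σ i' = i := hσ true
  have hj : σ j' = j := hσ false
  conv_rhs => rw [← hexch σ]
  rw [Measure.map_apply (by fun_prop) hmeas, preimage_inter,
    preimage_comp_perm_aboveNthLargest, preimage_comp_perm_aboveNthLargest, hi, hj]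

theorem measureReal_aboveNthLargest_inter [IsProbabilityMeasure P]
    (hexch : ∀ σ : Equiv.Perm ι, P.map (· ∘ σ) = P)
    (hdist : ∀ i j, i ≠ j → P {y | y i = y j} = 0) (hm1 : 1 ≤ m) (hm : m ≤ Fintype.card ι)
    {i j : ι} (hij : i ≠ j) :
    P.real (aboveNthLargest m i ∩ aboveNthLargest m j) =
      ((m : ℝ) - 1) * (m - 2) / (Fintype.card ι * (Fintype.card ι - 1)) := by
  classical
  have hsum := sum_measureReal_aboveNthLargest_inter hdist hm1 hm
  have hconst : ∀ p ∈ (Finset.univ : Finset ι).offDiag,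
      P.real (aboveNthLargest m p.1 ∩ aboveNthLargest m p.2) =
        P.real (aboveNthLargest m i ∩ aboveNthLargest m j) := fun p hp => by
    rw [measureReal_def, measureReal_def,
      measure_aboveNthLargest_inter_eq hexch hm1 hm (Finset.mem_offDiag.mp hp).2.2 hij]
  rw [Finset.sum_congr rfl hconst, Finset.sum_const, Finset.offDiag_card, nsmul_eq_mul,
    Finset.card_univ, Nat.cast_sub (Nat.le_mul_self _), Nat.cast_sub (Nat.le_mul_self _)] at hsum
  have hcard : (1 : ℝ) < Fintype.card ι := by
    exact_mod_cast Fintype.one_lt_card_iff.mpr ⟨i, j, hij⟩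
  rw [eq_div_iff (by nlinarith)]
  push_cast [Nat.cast_sub hm1] at hsum
  linear_combination hsum

end Exchangeable

namespace ProbabilityTheory

variable {Ω : Type*} [MeasurableSpace Ω] {μ : Measure Ω}

theorem IndepFun.measure_eq_eq_zero {α : Type*} [MeasurableSpace α] [MeasurableEq α]
    [IsFiniteMeasure μ] {X Y : Ω → α} (hXY : IndepFun X Y μ) (hX : Measurable X)
    (hY : Measurable Y) [NullSingletonClass (μ.map Y)] : μ {ω | X ω = Y ω} = 0 := by
  have hlaw := (indepFun_iff_map_prod_eq_prod_map_map hX.aemeasurable hY.aemeasurable).mp hXY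
  calc μ {ω | X ω = Y ω} = μ.map (fun ω => (X ω, Y ω)) (diagonal α) :=
        (Measure.map_apply (hX.prodMk hY) measurableSet_diagonal).symm
    _ = 0 := by
        rw [hlaw, Measure.prod_apply measurableSet_diagonal]
        simp [preimage]

theorem measureReal_Ioi_zero_of_map_neg_eq {ν : Measure ℝ} [IsProbabilityMeasure ν]
    [NullSingletonClass ν] (hsymm : ν.map (fun x => -x) = ν) : ν.real (Ioi 0) = 1 / 2 := by
  have hneg : ν.real (Iio 0) = ν.real (Ioi 0) := by
    conv_lhs => rw [← hsymm]
    rw [map_measureReal_apply measurable_neg measurableSet_Iio]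
    congr 1
    ext x
    simp
  have hIci : ν.real (Ici 0) = ν.real (Ioi 0) := measureReal_congr Ioi_ae_eq_Ici.symm
  have htotal := probReal_add_probReal_compl (μ := ν) (measurableSet_Iio (a := (0 : ℝ)))
  rw [compl_Iio, hneg, hIci] at htotal
  linarith

theorem measureReal_gaussianReal_Ioi_zero {v : NNReal} (hv : v ≠ 0) :
    (gaussianReal 0 v).real (Ioi 0) = 1 / 2 := by
  have := nullSingletonClass_gaussianReal (μ := 0) hv
  exact measureReal_Ioi_zero_of_map_neg_eq (by simpa using gaussianReal_map_neg (μ := 0) (v := v))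

theorem IndepFun.measureReal_pos_and_pos_of_gaussianReal {X Y : Ω → ℝ} [IsProbabilityMeasure μ]
    (hXY : IndepFun X Y μ) (hX : Measurable X) (hY : Measurable Y) {v w : NNReal} (hv : v ≠ 0)
    (hw : w ≠ 0) (hXlaw : μ.map X = gaussianReal 0 v) (hYlaw : μ.map Y = gaussianReal 0 w) :
    μ.real {ω | 0 < X ω ∧ 0 < Y ω} = 1 / 4 := by
  have hprod := hXY.measure_inter_preimage_eq_mul (Ioi 0) (Ioi 0) measurableSet_Ioi
    measurableSet_Ioi
  change (μ (X ⁻¹' Ioi 0 ∩ Y ⁻¹' Ioi 0)).toReal = 1 / 4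
  rw [hprod, ENNReal.toReal_mul, ← measureReal_def, ← measureReal_def,
    ← map_measureReal_apply hX measurableSet_Ioi, ← map_measureReal_apply hY measurableSet_Ioi,
    hXlaw, hYlaw, measureReal_gaussianReal_Ioi_zero hv, measureReal_gaussianReal_Ioi_zero hw]
  norm_num

variable {ι : Type*} [Fintype ι]

theorem iIndepFun.map_comp_perm_eq {β : Type*} [MeasurableSpace β] {X : ι → Ω → β}
    {ν : Measure β} (hX : ∀ i, AEMeasurable (X i) μ) (hlaw : ∀ i, μ.map (X i) = ν)
    (hindep : iIndepFun X μ) (σ : Equiv.Perm ι) :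
    μ.map (fun ω i => X (σ i) ω) = μ.map (fun ω i => X i ω) := by
  rw [(hindep.precomp σ.injective).map_fun_eq_pi_map (fun i => hX (σ i)),
    hindep.map_fun_eq_pi_map hX]
  simp only [hlaw]

theorem iIndepFun.measureReal_both_gt_nthLargest [IsProbabilityMeasure μ] {ν : Measure ℝ}
    [NullSingletonClass ν] {m : ℕ} {X : ι → Ω → ℝ} (hX : ∀ i, Measurable (X i))
    (hlaw : ∀ i, μ.map (X i) = ν)
    (hindep : iIndepFun X μ) (hm1 : 1 ≤ m) (hm : m ≤ Fintype.card ι) {i j : ι} (hij : i ≠ j) :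
    μ.real {ω | nthLargest (Finset.univ.val.map fun l => X l ω) m < X i ω ∧
        nthLargest (Finset.univ.val.map fun l => X l ω) m < X j ω} =
      ((m : ℝ) - 1) * (m - 2) / (Fintype.card ι * (Fintype.card ι - 1)) := by
  set Y : Ω → ι → ℝ := fun ω l => X l ω
  have hY : Measurable Y := measurable_pi_lambda _ hX
  have : IsProbabilityMeasure (μ.map Y) := Measure.isProbabilityMeasure_map hY.aemeasurable
  have hevent : {ω | nthLargest (Finset.univ.val.map fun l => X l ω) m < X i ω ∧
      nthLargest (Finset.univ.val.map fun l => X l ω) m < X j ω} =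
        Y ⁻¹' (aboveNthLargest m i ∩ aboveNthLargest m j) := rfl
  rw [hevent, ← map_measureReal_apply hY ((measurableSet_aboveNthLargest hm1 hm i).inter
    (measurableSet_aboveNthLargest hm1 hm j))]
  refine measureReal_aboveNthLargest_inter (fun σ => ?_) (fun i j hij => ?_) hm1 hm hij
  · rw [Measure.map_map (by fun_prop) hY]
    exact hindep.map_comp_perm_eq (fun i => (hX i).aemeasurable) hlaw σ
  · have : NullSingletonClass (μ.map (X j)) := hlaw j ▸ inferInstance
    rw [Measure.map_apply hY
      (measurableSet_eq_fun (measurable_pi_apply i) (measurable_pi_apply j))]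
    exact (hindep.indepFun hij).measure_eq_eq_zero (hX i) (hX j)

theorem iIndepFun.measureReal_both_gt_nthLargest_of_mem {κ : Type*} [IsProbabilityMeasure μ]
    {ν : Measure ℝ} [NullSingletonClass ν] {m : ℕ} {X : κ → Ω → ℝ} (hX : ∀ i, Measurable (X i))
    (hlaw : ∀ i, μ.map (X i) = ν) (hindep : iIndepFun X μ) {s : Finset κ} (hm1 : 1 ≤ m)
    (hm : m ≤ #s) {i j : κ} (hi : i ∈ s) (hj : j ∈ s) (hij : i ≠ j) :
    μ.real {ω | nthLargest (s.val.map fun l => X l ω) m < X i ω ∧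
        nthLargest (s.val.map fun l => X l ω) m < X j ω} =
      ((m : ℝ) - 1) * (m - 2) / (#s * (#s - 1)) := by
  have h := iIndepFun.measureReal_both_gt_nthLargest (X := fun l : s => X l) (fun l => hX l)
    (fun l => hlaw l) (hindep.precomp Subtype.val_injective) hm1 (by simpa using hm)
    (i := ⟨i, hi⟩) (j := ⟨j, hj⟩) (by simpa using hij)
  have hmap (ω : Ω) : Finset.univ.val.map (fun l : s => X l ω) = s.val.map fun l => X l ω :=
    Finset.univ_val_map_coe s fun l => X l ω
  simpa only [hmap, Fintype.card_coe] using h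

end ProbabilityTheory

theorem pHat_median_bias_odd_general
    {Ω : Type*} [MeasurableSpace Ω] (μ : Measure Ω) [IsProbabilityMeasure μ]
    (n : ℕ) (hodd : Odd n)
    (k : ℕ) (hk : 1 ≤ k) (hkn : k < n)
    (X : ℕ → Ω → ℝ)
    (hXmeas : ∀ i, Measurable (X i))
    (hXlaw : ∀ i, μ.map (X i) = gaussianReal 0 1)
    (hindep : iIndepFun X μ)
    (med : Ω → ℝ)
    (hmed : med = fun ω =>
      nthLargest (Multiset.map (fun i => X i ω) (Finset.Icc 1 n).val) ((n + 1) / 2))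
    (phat : Ω → ℝ)
    (hphat : phat = fun ω => (1 / ((n : ℝ) - k)) *
      ∑ j ∈ Finset.Icc 1 (n - k),
        (if med ω < X j ω ∧ med ω < X (j + k) ω then (1 : ℝ) else 0)) :
    (μ {ω | 0 < X 1 ω ∧ 0 < X (1 + k) ω}).toReal = 1 / 4 ∧
    (∫ ω, phat ω ∂μ) = 1 / 4 - 3 / (4 * n) := by
  obtain ⟨r, rfl⟩ := hodd
  refine ⟨(hindep.indepFun (by omega)).measureReal_pos_and_pos_of_gaussianReal (hXmeas _)
    (hXmeas _) one_ne_zero one_ne_zero (hXlaw _) (hXlaw _), ?_⟩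
  have : NullSingletonClass (gaussianReal 0 1) := nullSingletonClass_gaussianReal one_ne_zero
  have hr : (r : ℝ) ≠ 0 := by exact_mod_cast (by omega : r ≠ 0)
  have hpair (j : ℕ) (hj : j ∈ Finset.Icc 1 (2 * r + 1 - k)) :
      μ.real {ω | med ω < X j ω ∧ med ω < X (j + k) ω} = 1 / 4 - 3 / (4 * (2 * r + 1 : ℕ)) := by
    rw [Finset.mem_Icc] at hj
    rw [hmed, hindep.measureReal_both_gt_nthLargest_of_mem hXmeas hXlaw (by omega)
      (by simp; omega) (by simp; omega) (by simp; omega) (by omega),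
      (by omega : (2 * r + 1 + 1) / 2 = r + 1), Nat.card_Icc]
    push_cast
    field_simp
    ring
  have hmed_meas : Measurable med :=
    hmed ▸ measurable_nthLargest hXmeas _ (by omega) (by simp; omega)
  rw [hphat, integral_const_mul, integral_finset_sum_ite_one_zero _
      (p := fun j ω => med ω < X j ω ∧ med ω < X (j + k) ω) fun j _ =>
      (measurableSet_lt hmed_meas (hXmeas j)).inter (measurableSet_lt hmed_meas (hXmeas _)),
    Finset.sum_congr rfl hpair, Finset.sum_const, Nat.card_Icc, nsmul_eq_mul]
  have hnk : (2 * r + 1 : ℝ) - k ≠ 0 := by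
    have : (k : ℝ) < 2 * r + 1 := by exact_mod_cast hkn
    linarith
  push_cast [Nat.cast_sub hkn.le]
  field_simp

/-- For odd `n ≥ 3`, `1 ≤ k < n`, i.i.d. standard Gaussians
`X₁, …, X_n` with sample median `m̂ = X_{ν,n}` (`ν = (n+1)/2`), the estimator
`p̂_k = (1/(n-k)) Σ_{j=1}^{n-k} 1(X_j > m̂, X_{j+k} > m̂)` has expectation
`1/4 - 3/(4n)`; in particular its bias as an estimator of
`p_k = P(X₁ > 0, X_{1+k} > 0) = 1/4` is `-3/(4n) = O(1/n)`. -/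
theorem pHat_median_bias_odd
    {Ω : Type*} [MeasurableSpace Ω] (μ : Measure Ω) [IsProbabilityMeasure μ]
    (n : ℕ) (hodd : Odd n) (hn : 3 ≤ n)
    (k : ℕ) (hk : 1 ≤ k) (hkn : k < n)
    (X : ℕ → Ω → ℝ)
    (hXmeas : ∀ i, Measurable (X i))
    (hXlaw : ∀ i, μ.map (X i) = gaussianReal 0 1)
    (hindep : iIndepFun X μ)
    (med : Ω → ℝ)
    (hmed : med = fun ω =>
      nthLargest (Multiset.map (fun i => X i ω) (Finset.Icc 1 n).val) ((n + 1) / 2))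
    (phat : Ω → ℝ)
    (hphat : phat = fun ω => (1 / ((n : ℝ) - k)) *
      ∑ j ∈ Finset.Icc 1 (n - k),
        (if med ω < X j ω ∧ med ω < X (j + k) ω then (1 : ℝ) else 0)) :
    (μ {ω | 0 < X 1 ω ∧ 0 < X (1 + k) ω}).toReal = 1 / 4 ∧
    (∫ ω, phat ω ∂μ) = 1 / 4 - 3 / (4 * n) :=
  pHat_median_bias_odd_general μ n hodd k hk hkn X hXmeas hXlaw hindep med hmed phat hphat
end

section
/- Let h : ℝ → ℝ be strictly increasing and continuous and satisfy condition [A₊] with parameter b₊ > 0 (so that h(x) → +∞ as x → +∞ and h⁻¹(y) is defined and tends to +∞ for all sufficiently large y). Then for each fixed λ > 1 there exist constants C > 0 and y₀ such that for all y ≥ y₀: 0 ≤ h⁻¹(λy) − h⁻¹(y) ≤ C / h⁻¹(y). -/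
open MeasureTheory ProbabilityTheory Filter Real Set Function

/-- If `h` is strictly increasing, continuous and satisfies condition
[A₊] with parameter `b > 0`, then for each fixed `l > 1` there are `C > 0` and `y₀` such
that `0 ≤ h⁻¹(l y) - h⁻¹(y) ≤ C / h⁻¹(y)` for all `y ≥ y₀`. -/
theorem inverse_increment_bound
    (h : ℝ → ℝ) (hmono : StrictMono h) (hcont : Continuous h)
    (b : ℝ) (hb : 0 < b)
    (f r : ℝ → ℝ)
    (hf : Differentiable ℝ f)
    (hf' : Tendsto (fun x => deriv f x / x) atTop (nhds 0))
    (hr : Tendsto r atTop (nhds 0))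
    (hrep : ∀ᶠ x in atTop, h x = Real.exp (b * x ^ 2 + f x + r x)) :
    ∀ l : ℝ, 1 < l →
      ∃ C > (0 : ℝ), ∃ y₀ : ℝ, ∀ y ≥ y₀,
        0 ≤ invFun h (l * y) - invFun h y ∧
        invFun h (l * y) - invFun h y ≤ C / invFun h y := by
  intro l hl
  have hb2 : (0:ℝ) < b/2 := by linarith
  obtain ⟨x₀, hx₀⟩ := Filter.eventually_atTop.mp hrep
  have hf2 : ∀ᶠ x in atTop, |deriv f x / x| < b/2 := by
    have := hf'.eventually (eventually_abs_sub_lt 0 hb2)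
    simpa using this
  obtain ⟨x₁, hx₁⟩ := Filter.eventually_atTop.mp hf2
  have hr2 : ∀ᶠ x in atTop, |r x| < 1/2 := by
    have := hr.eventually (eventually_abs_sub_lt 0 (by norm_num : (0:ℝ) < 1/2))
    simpa using this
  obtain ⟨x₂, hx₂⟩ := Filter.eventually_atTop.mp hr2
  set X := max (max x₀ x₁) (max x₂ 1) with hX
  have hXx₀ : x₀ ≤ X := le_max_of_le_left (le_max_left _ _)
  have hXx₁ : x₁ ≤ X := le_max_of_le_left (le_max_right _ _)
  have hXx₂ : x₂ ≤ X := le_max_of_le_right (le_max_left _ _)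
  have hX1 : (1:ℝ) ≤ X := le_max_of_le_right (le_max_right _ _)
  have hderiv : ∀ x, X ≤ x → |deriv f x| ≤ b/2 * x := by
    intro x hx
    have hx0 : (0:ℝ) < x := lt_of_lt_of_le one_pos (hX1.trans hx)
    have h1 := le_of_lt (hx₁ x (hXx₁.trans hx))
    rw [abs_div, abs_of_pos hx0, div_le_iff₀ hx0] at h1
    linarith
  have hrb : ∀ x, X ≤ x → |r x| ≤ 1/2 := fun x hx => (hx₂ x (hXx₂.trans hx)).le
  have hrep' : ∀ x, X ≤ x → h x = Real.exp (b * x ^ 2 + f x + r x) :=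
    fun x hx => hx₀ x (hXx₀.trans hx)
  -- lower bound on f
  have hflow : ∀ x, X ≤ x → f X - b/2 * x^2 ≤ f x := by
    intro x hx
    rcases eq_or_lt_of_le hx with h' | h'
    · rw [← h']
      nlinarith [hX1, hb2]
    · obtain ⟨ξ, hξ, hslope⟩ := exists_deriv_eq_slope f h' hf.continuous.continuousOn
        hf.differentiableOn
      have hξX : X ≤ ξ := hξ.1.le
      have hd := (abs_le.mp (hderiv ξ hξX)).1
      have hfd : f x - f X = deriv f ξ * (x - X) := by
        rw [hslope, div_mul_cancel₀ _ (sub_ne_zero.mpr h'.ne')]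
      have hξx : ξ ≤ x := hξ.2.le
      have hX0 : (0:ℝ) < X := lt_of_lt_of_le one_pos hX1
      have h1 : -(b/2*ξ)*(x-X) ≤ deriv f ξ * (x-X) :=
        mul_le_mul_of_nonneg_right hd (by linarith)
      nlinarith [h1, mul_nonneg (mul_nonneg hb2.le (by linarith : (0:ℝ) ≤ x))
          (by linarith : (0:ℝ) ≤ x - ξ),
        mul_nonneg (mul_nonneg hb2.le (by linarith : (0:ℝ) ≤ ξ)) hX0.le]
  -- h tends to infinity
  have htop : Tendsto h atTop atTop := by
    have hbound : ∀ᶠ x in atTop, Real.exp (b/2 * x^2 + (f X - 1/2)) ≤ h x := by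
      filter_upwards [eventually_ge_atTop X] with x hx
      rw [hrep' x hx]
      apply Real.exp_le_exp.mpr
      have h1 := hflow x hx
      have h2 := (abs_le.mp (hrb x hx)).1
      nlinarith
    apply tendsto_atTop_mono' atTop hbound
    apply Real.tendsto_exp_atTop.comp
    apply tendsto_atTop_add_const_right
    exact (tendsto_pow_atTop two_ne_zero).const_mul_atTop hb2
  -- inverse facts
  have hinv : ∀ y, h X ≤ y → ∃ x, X ≤ x ∧ h x = y ∧ invFun h y = x := by
    intro y hy
    obtain ⟨z, hz1, hz2⟩ := ((htop.eventually_ge_atTop y).and (eventually_ge_atTop X)).exists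
    obtain ⟨x, hx, hhx⟩ := intermediate_value_Icc hz2 hcont.continuousOn ⟨hy, hz1⟩
    exact ⟨x, hx.1, hhx, by rw [← hhx]; exact Function.leftInverse_invFun hmono.injective x⟩
  have hlog : 0 < Real.log l := Real.log_pos hl
  have hC : 0 < (Real.log l + 1) / b := div_pos (by linarith) hb
  refine ⟨(Real.log l + 1) / b, hC, h X, ?_⟩
  intro y hy
  have hhX : 0 < h X := by rw [hrep' X le_rfl]; exact Real.exp_pos _
  have hy0 : 0 < y := lt_of_lt_of_le hhX hy
  have hly : y ≤ l * y := by nlinarith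
  obtain ⟨u, hu, hhu, hiu⟩ := hinv y hy
  obtain ⟨v, hv, hhv, hiv⟩ := hinv (l * y) (hy.trans hly)
  rw [hiu, hiv]
  have hu0 : (0:ℝ) < u := lt_of_lt_of_le one_pos (hX1.trans hu)
  have huv : u ≤ v := hmono.le_iff_le.mp (by rw [hhu, hhv]; exact hly)
  refine ⟨by linarith, ?_⟩
  rcases eq_or_lt_of_le huv with he | hlt
  · have h0 : v - u = 0 := by rw [← he]; ring
    rw [h0]; positivity
  · obtain ⟨ξ, hξ, hslope⟩ := exists_deriv_eq_slope f hlt hf.continuous.continuousOn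
      hf.differentiableOn
    have hfd : f v - f u = deriv f ξ * (v - u) := by
      rw [hslope, div_mul_cancel₀ _ (sub_ne_zero.mpr hlt.ne')]
    have hexp : b * v ^ 2 + f v + r v = Real.log l + (b * u ^ 2 + f u + r u) := by
      have h1 : Real.exp (b * v ^ 2 + f v + r v) = l * Real.exp (b * u ^ 2 + f u + r u) := by
        rw [← hrep' v hv, ← hrep' u hu, hhu, hhv]
      have h2 := congrArg Real.log h1
      rwa [Real.log_exp, Real.log_mul (by linarith) (Real.exp_ne_zero _), Real.log_exp] at h2
    have hξX : X ≤ ξ := hu.trans hξ.1.le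
    have hdξ := (abs_le.mp (hderiv ξ hξX)).1
    have hξv : ξ ≤ v := hξ.2.le
    have hv0 : (0:ℝ) < v := lt_of_lt_of_le hu0 huv
    have hru := abs_le.mp (hrb u hu)
    have hrv := abs_le.mp (hrb v hv)
    rw [div_div, le_div_iff₀ (by positivity : (0:ℝ) < b * u)]
    have hpos : 0 ≤ b * v + deriv f ξ := by nlinarith
    have h2 : (v - u) * (b * (u + v) + deriv f ξ) = Real.log l + r u - r v := by
      linear_combination hexp - hfd
    have h3 : (v - u) * (b * u) =
        (v - u) * (b * (u + v) + deriv f ξ) - (v - u) * (b * v + deriv f ξ) := by ring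
    linarith [mul_nonneg (sub_nonneg.2 huv) hpos, hru.2, hrv.1]
end
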